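/- arXiv:2410.02784 — 5 statements merged into one kernel-verified Lean document; each statement's English description precedes it below -/
import Mathlib

section
/- Let α, β ∈ (−1, 1), let E be a nonnegative integrable function on [0,1], let J be a nonnegative measurable function on [0,1] with ∫₀^1 J(θ)² (1−θ)^α θ^β dθ < ∞, and let L > 0 satisfy E(θ) ≤ J(θ) + L ∫₀^θ E(η) dη for all θ ∈ [0,1]. Then there exists a constant C > 0, depending only on L, α, β, such that (∫₀^1 E(θ)² (1−θ)^α θ^β dθ)^{1/2} ≤ C (∫₀^1 J(θ)² (1−θ)^α θ^β dθ)^{1/2}. -/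
/-!
By the integral Gronwall inequality, `∫₀^θ E ≤ M ∫₀¹ J` with `M` depending only on `L`, so
`E ≤ J + L M ∫₀¹ J` pointwise. Squaring and integrating against `w(θ) = (1 - θ)^α θ^β` gives
`‖E‖² ≤ 2 ‖J‖² + 2 (L M)² (∫₀¹ J)² ∫₀¹ w`, and Cauchy–Schwarz bounds `(∫₀¹ J)²` by
`‖J‖² ∫₀¹ w⁻¹`. Both `w` and `w⁻¹` are integrable because `|α|, |β| < 1`.
-/

open MeasureTheory Set
open scoped ENNReal

theorem integral_mono_interval_of_nonneg {f : ℝ → ℝ} {a b c d : ℝ}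
    (hf : IntegrableOn f (Icc c d)) (hf0 : ∀ θ ∈ Icc c d, 0 ≤ f θ)
    (hca : c ≤ a) (hab : a ≤ b) (hbd : b ≤ d) :
    ∫ η in a..b, f η ≤ ∫ η in c..d, f η :=
  have hcd : c ≤ d := hca.trans (hab.trans hbd)
  intervalIntegral.integral_mono_interval hca hab hbd
    ((ae_restrict_iff' measurableSet_Ioc).2 <| ae_of_all _ fun θ hθ =>
      hf0 θ (Ioc_subset_Icc_self hθ))
    (hf.mono_set (uIcc_subset_Icc (left_mem_Icc.2 hcd) (right_mem_Icc.2 hcd))).intervalIntegrable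

section Gronwall

variable {E J : ℝ → ℝ} {L : ℝ}

/-- The contribution `L (b - a) ∫₀^b E ≤ ½ ∫₀^b E` of the step is absorbed into the
left-hand side. -/
theorem primitive_le_two_mul_add (hL : 0 ≤ L) (hE : IntegrableOn E (Icc 0 1))
    (hE0 : ∀ θ ∈ Icc (0 : ℝ) 1, 0 ≤ E θ) (hJ : IntegrableOn J (Icc 0 1))
    (hJ0 : ∀ θ ∈ Icc (0 : ℝ) 1, 0 ≤ J θ)
    (hEJ : ∀ θ ∈ Icc (0 : ℝ) 1, E θ ≤ J θ + L * ∫ η in (0 : ℝ)..θ, E η)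
    {a b : ℝ} (ha : 0 ≤ a) (hab : a ≤ b) (hb : b ≤ 1) (hstep : L * (b - a) ≤ 1 / 2) :
    ∫ η in (0 : ℝ)..b, E η ≤ 2 * (∫ η in (0 : ℝ)..a, E η) + 2 * ∫ η in (0 : ℝ)..1, J η := by
  have hsub : Icc a b ⊆ Icc 0 1 := Icc_subset_Icc ha hb
  have hE_ab : IntervalIntegrable E volume a b :=
    (hE.mono_set ((uIcc_of_le hab).subset.trans hsub)).intervalIntegrable
  have hJ_ab : IntervalIntegrable J volume a b :=
    (hJ.mono_set ((uIcc_of_le hab).subset.trans hsub)).intervalIntegrable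
  set Fb := ∫ η in (0 : ℝ)..b, E η
  have hFb : 0 ≤ Fb := intervalIntegral.integral_nonneg (ha.trans hab)
    fun θ hθ => hE0 θ ⟨hθ.1, hθ.2.trans hb⟩
  have hsplit : Fb = (∫ η in (0 : ℝ)..a, E η) + ∫ η in a..b, E η :=
    (intervalIntegral.integral_add_adjacent_intervals
      (hE.mono_set (uIcc_subset_Icc ⟨le_rfl, zero_le_one⟩ ⟨ha, hab.trans hb⟩)).intervalIntegrable
      hE_ab).symm
  have hEab : ∫ η in a..b, E η ≤ ∫ η in a..b, (J η + L * Fb) := by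
    refine intervalIntegral.integral_mono_on hab hE_ab (hJ_ab.add intervalIntegrable_const)
      fun θ hθ => (hEJ θ (hsub hθ)).trans ?_
    gcongr
    exact integral_mono_interval_of_nonneg (hE.mono_set (Icc_subset_Icc le_rfl hb))
      (fun η hη => hE0 η ⟨hη.1, hη.2.trans hb⟩) le_rfl (ha.trans hθ.1) hθ.2
  have hJab : ∫ η in a..b, J η ≤ ∫ η in (0 : ℝ)..1, J η :=
    integral_mono_interval_of_nonneg hJ hJ0 ha hab hb
  rw [intervalIntegral.integral_add hJ_ab intervalIntegrable_const,
    intervalIntegral.integral_const, smul_eq_mul] at hEab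
  have habsorb : (b - a) * (L * Fb) ≤ 1 / 2 * Fb := by
    rw [← mul_assoc, mul_comm (b - a)]
    exact mul_le_mul_of_nonneg_right hstep hFb
  linarith

/-- Integral Gronwall inequality: `[0, 1]` is cut into `⌈2L⌉₊ + 1` steps, on each of which
`∫₀^· E + 2 ∫₀¹ J` at most doubles. -/
theorem primitive_le_of_le_add_mul_primitive (hL : 0 ≤ L) (hE : IntegrableOn E (Icc 0 1))
    (hE0 : ∀ θ ∈ Icc (0 : ℝ) 1, 0 ≤ E θ) (hJ : IntegrableOn J (Icc 0 1))
    (hJ0 : ∀ θ ∈ Icc (0 : ℝ) 1, 0 ≤ J θ)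
    (hEJ : ∀ θ ∈ Icc (0 : ℝ) 1, E θ ≤ J θ + L * ∫ η in (0 : ℝ)..θ, E η)
    {θ : ℝ} (hθ : θ ∈ Icc (0 : ℝ) 1) :
    ∫ η in (0 : ℝ)..θ, E η ≤ 2 ^ (⌈2 * L⌉₊ + 2) * ∫ η in (0 : ℝ)..1, J η := by
  set n := ⌈2 * L⌉₊ + 1
  have hn : (0 : ℝ) < n := by positivity
  have hLn : 2 * L ≤ n := (Nat.le_ceil _).trans (by simp [n])
  set B := ∫ η in (0 : ℝ)..1, J η
  have hB : 0 ≤ B := intervalIntegral.integral_nonneg zero_le_one hJ0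
  have hgrowth : ∀ k ≤ n, (∫ η in (0 : ℝ)..(k / n), E η) + 2 * B ≤ 2 ^ (k + 1) * B := by
    intro k
    induction k with
    | zero => intro _; simp
    | succ k ih =>
      intro hk
      have hkn : (k : ℝ) + 1 ≤ n := by exact_mod_cast hk
      have hstep := primitive_le_two_mul_add hL hE hE0 hJ hJ0 hEJ (a := k / n) (b := (k + 1) / n)
        (by positivity) (by gcongr; linarith) ((div_le_one hn).2 hkn)
        (by rw [← sub_div, add_sub_cancel_left, mul_one_div, div_le_iff₀ hn]; linarith)
      push_cast
      rw [pow_succ]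
      linarith [ih (by omega)]
  have hθ1 : ∫ η in (0 : ℝ)..θ, E η ≤ ∫ η in (0 : ℝ)..1, E η :=
    integral_mono_interval_of_nonneg hE hE0 le_rfl hθ.1 hθ.2
  have h1 := hgrowth n le_rfl
  rw [div_self hn.ne'] at h1
  linarith

end Gronwall

noncomputable def jacobiWeight (a b θ : ℝ) : ℝ := (1 - θ) ^ a * θ ^ b

theorem measurable_jacobiWeight {a b : ℝ} : Measurable (jacobiWeight a b) := by
  unfold jacobiWeight
  fun_prop

theorem jacobiWeight_pos {a b θ : ℝ} (hθ : θ ∈ Ioo (0 : ℝ) 1) : 0 < jacobiWeight a b θ :=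
  mul_pos (Real.rpow_pos_of_pos (sub_pos.2 hθ.2) _) (Real.rpow_pos_of_pos hθ.1 _)

theorem integrableOn_jacobiWeight {a b : ℝ} (ha : -1 < a) (hb : -1 < b) :
    IntegrableOn (jacobiWeight a b) (Ioo 0 1) := by
  have h := (Complex.betaIntegral_convergent (u := b + 1) (v := a + 1)
    (by simp; linarith) (by simp; linarith)).norm
  rw [intervalIntegrable_iff_integrableOn_Ioo_of_le zero_le_one] at h
  refine h.congr_fun (fun θ hθ => ?_) measurableSet_Ioo
  have h1 : (1 - (θ : ℂ)) = ((1 - θ : ℝ) : ℂ) := by push_cast; ring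
  dsimp only
  rw [norm_mul, h1, Complex.norm_cpow_eq_rpow_re_of_pos hθ.1,
    Complex.norm_cpow_eq_rpow_re_of_pos (by linarith [hθ.2]), jacobiWeight]
  simp [mul_comm]

theorem integrableOn_inv_jacobiWeight {a b : ℝ} (ha : a < 1) (hb : b < 1) :
    IntegrableOn (fun θ => (jacobiWeight a b θ)⁻¹) (Ioo 0 1) := by
  refine (integrableOn_jacobiWeight (neg_lt_neg ha) (neg_lt_neg hb)).congr_fun
    (fun θ hθ => ?_) measurableSet_Ioo
  rw [jacobiWeight, jacobiWeight, Real.rpow_neg (by linarith [hθ.2]), Real.rpow_neg hθ.1.le,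
    mul_inv]

section Weighted

variable {X : Type*} [MeasurableSpace X] {μ : Measure X}

theorem sq_lintegral_ofReal_le_mul_lintegral_inv {f w : X → ℝ}
    (hf : AEMeasurable f μ) (hw : AEMeasurable w μ) (hf0 : ∀ᵐ x ∂μ, 0 ≤ f x)
    (hw0 : ∀ᵐ x ∂μ, 0 < w x) :
    (∫⁻ x, ENNReal.ofReal (f x) ∂μ) ^ 2 ≤
      (∫⁻ x, ENNReal.ofReal (f x ^ 2 * w x) ∂μ) * ∫⁻ x, ENNReal.ofReal (w x)⁻¹ ∂μ := by
  have H := ENNReal.lintegral_mul_le_Lp_mul_Lq μ Real.HolderConjugate.two_two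
    (f := fun x => ENNReal.ofReal (f x * √(w x))) (g := fun x => ENNReal.ofReal (√(w x))⁻¹)
    (by fun_prop) (by fun_prop)
  have h1 : ∫⁻ x, ENNReal.ofReal (f x) ∂μ
      = ∫⁻ x, ENNReal.ofReal (f x * √(w x)) * ENNReal.ofReal (√(w x))⁻¹ ∂μ := by
    refine lintegral_congr_ae ?_
    filter_upwards [hw0] with x hx
    rw [← ENNReal.ofReal_mul' (by positivity), mul_assoc,
      mul_inv_cancel₀ (Real.sqrt_pos.2 hx).ne', mul_one]
  have h2 : ∫⁻ x, ENNReal.ofReal (f x * √(w x)) ^ (2 : ℝ) ∂μ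
      = ∫⁻ x, ENNReal.ofReal (f x ^ 2 * w x) ∂μ := by
    refine lintegral_congr_ae ?_
    filter_upwards [hf0, hw0] with x hf hw
    rw [ENNReal.ofReal_rpow_of_nonneg (by positivity) zero_le_two, Real.rpow_two, mul_pow,
      Real.sq_sqrt hw.le]
  have h3 : ∫⁻ x, ENNReal.ofReal (√(w x))⁻¹ ^ (2 : ℝ) ∂μ
      = ∫⁻ x, ENNReal.ofReal (w x)⁻¹ ∂μ := by
    refine lintegral_congr_ae ?_
    filter_upwards [hw0] with x hw
    rw [ENNReal.ofReal_rpow_of_nonneg (by positivity) zero_le_two, Real.rpow_two, inv_pow,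
      Real.sq_sqrt hw.le]
  simp only [Pi.mul_apply] at H
  rw [h2, h3] at H
  rw [h1]
  calc _ ≤ ((∫⁻ x, ENNReal.ofReal (f x ^ 2 * w x) ∂μ) ^ (1 / 2 : ℝ) *
        (∫⁻ x, ENNReal.ofReal (w x)⁻¹ ∂μ) ^ (1 / 2 : ℝ)) ^ 2 := by gcongr
    _ = _ := by
      rw [mul_pow, ← ENNReal.rpow_natCast, ← ENNReal.rpow_natCast, ← ENNReal.rpow_mul,
        ← ENNReal.rpow_mul]
      norm_num

theorem integrable_of_lintegral_ofReal_sq_mul_ne_top {f w : X → ℝ} (hf : AEMeasurable f μ)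
    (hw : AEMeasurable w μ) (hf0 : ∀ᵐ x ∂μ, 0 ≤ f x) (hw0 : ∀ᵐ x ∂μ, 0 < w x)
    (hS : ∫⁻ x, ENNReal.ofReal (f x ^ 2 * w x) ∂μ ≠ ⊤)
    (hK : ∫⁻ x, ENNReal.ofReal (w x)⁻¹ ∂μ ≠ ⊤) :
    Integrable f μ := by
  refine ⟨hf.aestronglyMeasurable, (hasFiniteIntegral_iff_ofReal hf0).2 ?_⟩
  simpa using (sq_lintegral_ofReal_le_mul_lintegral_inv hf hw hf0 hw0).trans_lt
    (ENNReal.mul_lt_top hS.lt_top hK.lt_top)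

theorem lintegral_ofReal_sq_mul_le_of_le_add_const {f g w : X → ℝ} {c : ℝ}
    (hg : AEMeasurable g μ) (hw : AEMeasurable w μ) (hc : 0 ≤ c) (hw0 : ∀ᵐ x ∂μ, 0 ≤ w x)
    (hfg : ∀ᵐ x ∂μ, 0 ≤ f x ∧ f x ≤ g x + c) :
    ∫⁻ x, ENNReal.ofReal (f x ^ 2 * w x) ∂μ ≤
      2 * ∫⁻ x, ENNReal.ofReal (g x ^ 2 * w x) ∂μ
        + 2 * ENNReal.ofReal c ^ 2 * ∫⁻ x, ENNReal.ofReal (w x) ∂μ := by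
  calc _ ≤ ∫⁻ x, (2 * ENNReal.ofReal (g x ^ 2 * w x)
          + 2 * ENNReal.ofReal c ^ 2 * ENNReal.ofReal (w x)) ∂μ := by
        refine lintegral_mono_ae ?_
        filter_upwards [hw0, hfg] with x hwx ⟨hfx, hfgx⟩
        have hsq : f x ^ 2 * w x ≤ 2 * (g x ^ 2 * w x) + 2 * c ^ 2 * w x := by
          have : f x ^ 2 ≤ 2 * g x ^ 2 + 2 * c ^ 2 := by nlinarith [sq_nonneg (g x - c)]
          nlinarith
        calc _ ≤ ENNReal.ofReal (2 * (g x ^ 2 * w x) + 2 * c ^ 2 * w x) :=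
              ENNReal.ofReal_le_ofReal hsq
          _ ≤ ENNReal.ofReal (2 * (g x ^ 2 * w x)) + ENNReal.ofReal (2 * c ^ 2 * w x) :=
              ENNReal.ofReal_add_le
          _ = _ := by
              rw [ENNReal.ofReal_mul (by positivity : (0 : ℝ) ≤ 2 * c ^ 2),
                ENNReal.ofReal_mul zero_le_two, ENNReal.ofReal_mul zero_le_two,
                ENNReal.ofReal_pow hc, ENNReal.ofReal_ofNat]
    _ = _ := by
        rw [lintegral_add_left' (by fun_prop), lintegral_const_mul' _ _ ENNReal.ofNat_ne_top,
          lintegral_const_mul' _ _ (by finiteness)]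

theorem lintegral_ofReal_sq_mul_le_of_le_add_integral {f g w : X → ℝ} {c : ℝ}
    (hg : Integrable g μ) (hw : AEMeasurable w μ) (hg0 : ∀ᵐ x ∂μ, 0 ≤ g x)
    (hw0 : ∀ᵐ x ∂μ, 0 < w x) (hc : 0 ≤ c)
    (hfg : ∀ᵐ x ∂μ, 0 ≤ f x ∧ f x ≤ g x + c * ∫ x, g x ∂μ) :
    ∫⁻ x, ENNReal.ofReal (f x ^ 2 * w x) ∂μ ≤
      (2 + 2 * ENNReal.ofReal c ^ 2 * (∫⁻ x, ENNReal.ofReal (w x) ∂μ)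
          * ∫⁻ x, ENNReal.ofReal (w x)⁻¹ ∂μ) * ∫⁻ x, ENNReal.ofReal (g x ^ 2 * w x) ∂μ := by
  have hB : ENNReal.ofReal (∫ x, g x ∂μ) ^ 2 ≤
      (∫⁻ x, ENNReal.ofReal (g x ^ 2 * w x) ∂μ) * ∫⁻ x, ENNReal.ofReal (w x)⁻¹ ∂μ := by
    rw [ofReal_integral_eq_lintegral_ofReal hg hg0]
    exact sq_lintegral_ofReal_le_mul_lintegral_inv hg.aemeasurable hw hg0 hw0
  have hcB : 0 ≤ c * ∫ x, g x ∂μ := mul_nonneg hc (integral_nonneg_of_ae hg0)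
  calc _ ≤ _ := lintegral_ofReal_sq_mul_le_of_le_add_const hg.aemeasurable hw hcB
        (hw0.mono fun _ h => h.le) hfg
    _ = 2 * (∫⁻ x, ENNReal.ofReal (g x ^ 2 * w x) ∂μ) + 2 * ENNReal.ofReal c ^ 2
          * ENNReal.ofReal (∫ x, g x ∂μ) ^ 2 * ∫⁻ x, ENNReal.ofReal (w x) ∂μ := by
        rw [ENNReal.ofReal_mul hc, mul_pow]
        ring
    _ ≤ 2 * (∫⁻ x, ENNReal.ofReal (g x ^ 2 * w x) ∂μ) + 2 * ENNReal.ofReal c ^ 2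
          * ((∫⁻ x, ENNReal.ofReal (g x ^ 2 * w x) ∂μ) * ∫⁻ x, ENNReal.ofReal (w x)⁻¹ ∂μ)
          * ∫⁻ x, ENNReal.ofReal (w x) ∂μ := by gcongr
    _ = _ := by ring

end Weighted

/-- Weighted `L²` Gronwall-type bound with Jacobi weight `(1-θ)^α θ^β`,
`α, β ∈ (-1,1)`: if nonnegative integrable `E` satisfies
`E θ ≤ J θ + L ∫₀^θ E` with `J ≥ 0` of finite weighted `L²` norm, then
`‖E‖_{0,ω^{α,β,1}} ≤ C ‖J‖_{0,ω^{α,β,1}}` for a constant `C` depending only on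
`L, α, β`. -/
theorem weightedL2_bound_of_gronwall (α β : ℝ)
    (hα : α ∈ Ioo (-1:ℝ) 1) (hβ : β ∈ Ioo (-1:ℝ) 1) (L : ℝ) (hL : 0 < L) :
    ∃ C > (0:ℝ), ∀ E J : ℝ → ℝ,
      IntegrableOn E (Icc (0:ℝ) 1) → (∀ θ ∈ Icc (0:ℝ) 1, 0 ≤ E θ) →
      Measurable J → (∀ θ ∈ Icc (0:ℝ) 1, 0 ≤ J θ) →
      (∫⁻ θ in Ioo (0:ℝ) 1, ENNReal.ofReal (J θ ^ 2 * (1 - θ) ^ α * θ ^ β)) < ⊤ →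
      (∀ θ ∈ Icc (0:ℝ) 1, E θ ≤ J θ + L * ∫ η in (0:ℝ)..θ, E η) →
      (∫⁻ θ in Ioo (0:ℝ) 1, ENNReal.ofReal (E θ ^ 2 * (1 - θ) ^ α * θ ^ β)) ^ ((1:ℝ)/2)
        ≤ ENNReal.ofReal C *
          (∫⁻ θ in Ioo (0:ℝ) 1, ENNReal.ofReal (J θ ^ 2 * (1 - θ) ^ α * θ ^ β)) ^ ((1:ℝ)/2) := by
  have hw0 : ∀ᵐ θ ∂volume.restrict (Ioo (0:ℝ) 1), 0 < jacobiWeight α β θ :=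
    ae_restrict_of_forall_mem measurableSet_Ioo fun _ => jacobiWeight_pos
  have hK₁ := (integrableOn_jacobiWeight hα.1 hβ.1).lintegral_lt_top.ne
  have hK₂ := (integrableOn_inv_jacobiWeight hα.2 hβ.2).lintegral_lt_top.ne
  set M : ℝ := 2 ^ (⌈2 * L⌉₊ + 2)
  set D : ℝ≥0∞ := 2 + 2 * ENNReal.ofReal (L * M) ^ 2
    * (∫⁻ θ in Ioo (0:ℝ) 1, ENNReal.ofReal (jacobiWeight α β θ))
    * ∫⁻ θ in Ioo (0:ℝ) 1, ENNReal.ofReal (jacobiWeight α β θ)⁻¹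
  refine ⟨(D ^ (1 / 2 : ℝ)).toReal, ENNReal.toReal_pos (by positivity) (by finiteness), ?_⟩
  intro E J hE hE0 hJm hJ0 hSJ hEJ
  have hw : ∀ θ, (1 - θ) ^ α * θ ^ β = jacobiWeight α β θ := fun _ => rfl
  simp only [mul_assoc, hw] at hSJ ⊢
  have hJ0' : ∀ᵐ θ ∂volume.restrict (Ioo (0:ℝ) 1), 0 ≤ J θ :=
    ae_restrict_of_forall_mem measurableSet_Ioo fun θ hθ => hJ0 θ (Ioo_subset_Icc_self hθ)
  have hJ : IntegrableOn J (Ioo 0 1) := integrable_of_lintegral_ofReal_sq_mul_ne_top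
    hJm.aemeasurable measurable_jacobiWeight.aemeasurable hJ0' hw0 hSJ.ne hK₂
  have hE_le : ∀ θ ∈ Icc (0:ℝ) 1, E θ ≤ J θ + L * M * ∫ θ in Ioo (0:ℝ) 1, J θ := fun θ hθ =>
    (hEJ θ hθ).trans <| by
      rw [← integral_Ioc_eq_integral_Ioo, ← intervalIntegral.integral_of_le zero_le_one,
        mul_assoc]
      gcongr
      exact primitive_le_of_le_add_mul_primitive hL.le hE hE0
        ((integrableOn_Icc_iff_integrableOn_Ioo).2 hJ) hJ0 hEJ hθ
  have hE_sq : ∫⁻ θ in Ioo (0:ℝ) 1, ENNReal.ofReal (E θ ^ 2 * jacobiWeight α β θ) ≤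
      D * ∫⁻ θ in Ioo (0:ℝ) 1, ENNReal.ofReal (J θ ^ 2 * jacobiWeight α β θ) :=
    lintegral_ofReal_sq_mul_le_of_le_add_integral hJ measurable_jacobiWeight.aemeasurable
      hJ0' hw0 (by positivity)
      (ae_restrict_of_forall_mem measurableSet_Ioo fun θ hθ =>
        ⟨hE0 θ (Ioo_subset_Icc_self hθ), hE_le θ (Ioo_subset_Icc_self hθ)⟩)
  calc _ ≤ _ := ENNReal.rpow_le_rpow hE_sq (by norm_num)
    _ = _ := by
      rw [ENNReal.mul_rpow_of_nonneg _ _ (by norm_num), ENNReal.ofReal_toReal (by finiteness)]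
end

section
/- Let μ ∈ (0,1), κ ∈ (0, 1−μ), and let K : [0,1]×[0,1] → ℝ be continuous and κ-Hölder in its first variable. Then there exists a constant C > 0 (depending only on μ, κ and K) such that for every continuous v : [0,1] → ℝ and all θ₁, θ₂ ∈ [0,1] with θ₁ ≠ θ₂, |(𝒦₁v)(θ₁) − (𝒦₁v)(θ₂)| ≤ C |θ₁ − θ₂|^κ · max_{θ∈[0,1]} |v(θ)|. -/
open MeasureTheory Set

/-- The weakly singular Volterra integral operator
`(𝒦₁v)(t) = ∫₀^t (t-s)^{-μ} K(t,s) v(s) ds`. -/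
noncomputable def K1op (μ : ℝ) (K : ℝ → ℝ → ℝ) (v : ℝ → ℝ) (t : ℝ) : ℝ :=
  ∫ s in (0:ℝ)..t, (t - s) ^ (-μ) * K t s * v s

lemma K1aux_II (μ c p q : ℝ) (h : -1 < -μ) :
    IntervalIntegrable (fun s => (c - s) ^ (-μ)) volume p q := by
  have := (intervalIntegral.intervalIntegrable_rpow' (a := c - p) (b := c - q) h).comp_sub_left c
  simpa using this

lemma K1aux_int (μ c p q : ℝ) (h : -1 < -μ) :
    ∫ s in p..q, (c - s) ^ (-μ)
      = ((c - p) ^ (-μ + 1) - (c - q) ^ (-μ + 1)) / (-μ + 1) := by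
  rw [intervalIntegral.integral_comp_sub_left (fun x => x ^ (-μ)) c,
    integral_rpow (Or.inl h)]

/-- Hölder-type bound for the weakly singular Volterra operator `𝒦₁`:
for `μ ∈ (0,1)`, `κ ∈ (0,1-μ)`, and `K` continuous and `κ`-Hölder in its first
variable, there is `C > 0` with
`|(𝒦₁v)(θ₁) - (𝒦₁v)(θ₂)| ≤ C |θ₁-θ₂|^κ · max |v|` for all continuous `v`. -/
theorem K1_holder_increment_bound (μ κ : ℝ) (hμ : μ ∈ Ioo (0:ℝ) 1)
    (hκ : κ ∈ Ioo (0:ℝ) (1 - μ)) (K : ℝ → ℝ → ℝ)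
    (hKcont : ContinuousOn (fun p : ℝ × ℝ => K p.1 p.2) (Icc 0 1 ×ˢ Icc 0 1))
    (Lip : ℝ) (hLip : 0 ≤ Lip)
    (hKH : ∀ θ₁ ∈ Icc (0:ℝ) 1, ∀ θ₂ ∈ Icc (0:ℝ) 1, ∀ s ∈ Icc (0:ℝ) 1,
      |K θ₁ s - K θ₂ s| ≤ Lip * |θ₁ - θ₂| ^ κ) :
    ∃ C > (0:ℝ), ∀ v : ℝ → ℝ, ContinuousOn v (Icc (0:ℝ) 1) →
      ∀ θ₁ ∈ Icc (0:ℝ) 1, ∀ θ₂ ∈ Icc (0:ℝ) 1, θ₁ ≠ θ₂ →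
      |K1op μ K v θ₁ - K1op μ K v θ₂|
        ≤ C * |θ₁ - θ₂| ^ κ * sSup ((fun θ => |v θ|) '' Icc (0:ℝ) 1) := by
  obtain ⟨hμ0, hμ1⟩ := hμ
  obtain ⟨hκ0, hκ1⟩ := hκ
  have hd : (0:ℝ) < 1 - μ := by linarith
  have hr : (-1:ℝ) < -μ := by linarith
  have he : -μ + 1 = 1 - μ := by ring
  -- bound for K
  obtain ⟨B0, hB0⟩ := (isCompact_Icc.prod isCompact_Icc).exists_bound_of_continuousOn hKcont
  set B : ℝ := max B0 0 with hBdef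
  have hBnn : (0:ℝ) ≤ B := le_max_right _ _
  have hB : ∀ t ∈ Icc (0:ℝ) 1, ∀ s ∈ Icc (0:ℝ) 1, |K t s| ≤ B := by
    intro t ht s hs
    exact le_trans (by simpa using hB0 (t, s) ⟨ht, hs⟩) (le_max_left _ _)
  have hKslice : ∀ t ∈ Icc (0:ℝ) 1, ContinuousOn (fun s => K t s) (Icc 0 1) := by
    intro t ht
    exact hKcont.comp ((continuous_const.prodMk continuous_id).continuousOn)
      (fun s hs => ⟨ht, hs⟩)
  refine ⟨(Lip + 2 * B + 1) / (1 - μ), by positivity, ?_⟩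
  intro v hv θ₁ hθ₁ θ₂ hθ₂ hne
  set M : ℝ := sSup ((fun θ => |v θ|) '' Icc (0:ℝ) 1) with hMdef
  have hbdd : BddAbove ((fun θ => |v θ|) '' Icc (0:ℝ) 1) :=
    (isCompact_Icc.image_of_continuousOn (continuous_abs.comp_continuousOn hv)).bddAbove
  have hM : ∀ s ∈ Icc (0:ℝ) 1, |v s| ≤ M := fun s hs => le_csSup hbdd ⟨s, hs, rfl⟩
  have hMnn : (0:ℝ) ≤ M :=
    le_trans (abs_nonneg _) (hM 0 ⟨le_refl 0, zero_le_one⟩)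
  -- main estimate for a < b
  have key : ∀ a ∈ Icc (0:ℝ) 1, ∀ b ∈ Icc (0:ℝ) 1, a < b →
      |K1op μ K v b - K1op μ K v a|
        ≤ (Lip + 2 * B + 1) / (1 - μ) * (b - a) ^ κ * M := by
    intro a ha b hb hab
    have ha0 : (0:ℝ) ≤ a := ha.1
    have hb1 : b ≤ 1 := hb.2
    have hΔ0 : (0:ℝ) < b - a := sub_pos.2 hab
    have hΔ1 : b - a ≤ 1 := by linarith [ha.1]
    have hsub0a : uIcc (0:ℝ) a ⊆ Icc 0 1 := by
      rw [uIcc_of_le ha0]; exact Icc_subset_Icc le_rfl ha.2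
    have hsubab : uIcc a b ⊆ Icc (0:ℝ) 1 := by
      rw [uIcc_of_le hab.le]; exact Icc_subset_Icc ha0 hb1
    have hKa' : ContinuousOn (fun s => K a s) (uIcc (0:ℝ) a) := (hKslice a ha).mono hsub0a
    have hKb' : ContinuousOn (fun s => K b s) (uIcc (0:ℝ) a) := (hKslice b hb).mono hsub0a
    have hKbab : ContinuousOn (fun s => K b s) (uIcc a b) := (hKslice b hb).mono hsubab
    have hv0a : ContinuousOn v (uIcc (0:ℝ) a) := hv.mono hsub0a
    have hvab : ContinuousOn v (uIcc a b) := hv.mono hsubab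
    -- integrability
    have If1a : IntervalIntegrable (fun s => (a - s) ^ (-μ) * K a s * v s) volume 0 a :=
      (((K1aux_II μ a 0 a hr).mul_continuousOn hKa').mul_continuousOn hv0a)
    have If2a : IntervalIntegrable (fun s => (b - s) ^ (-μ) * K b s * v s) volume 0 a :=
      (((K1aux_II μ b 0 a hr).mul_continuousOn hKb').mul_continuousOn hv0a)
    have If2ab : IntervalIntegrable (fun s => (b - s) ^ (-μ) * K b s * v s) volume a b :=
      (((K1aux_II μ b a b hr).mul_continuousOn hKbab).mul_continuousOn hvab)
    have Ig1 : IntervalIntegrable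
        (fun s => ((b - s) ^ (-μ) - (a - s) ^ (-μ)) * K b s * v s) volume 0 a :=
      ((((K1aux_II μ b 0 a hr).sub (K1aux_II μ a 0 a hr)).mul_continuousOn
        hKb').mul_continuousOn hv0a)
    have Ig2 : IntervalIntegrable
        (fun s => (a - s) ^ (-μ) * (K b s - K a s) * v s) volume 0 a :=
      (((K1aux_II μ a 0 a hr).mul_continuousOn (hKb'.sub hKa')).mul_continuousOn hv0a)
    -- splitting identity
    have split : K1op μ K v b - K1op μ K v a
        = (∫ s in (0:ℝ)..a, ((b - s) ^ (-μ) - (a - s) ^ (-μ)) * K b s * v s)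
          + (∫ s in (0:ℝ)..a, (a - s) ^ (-μ) * (K b s - K a s) * v s)
          + ∫ s in a..b, (b - s) ^ (-μ) * K b s * v s := by
      have hsplit : K1op μ K v b
          = (∫ s in (0:ℝ)..a, (b - s) ^ (-μ) * K b s * v s)
            + ∫ s in a..b, (b - s) ^ (-μ) * K b s * v s := by
        rw [K1op, intervalIntegral.integral_add_adjacent_intervals If2a If2ab]
      have hdiff : (∫ s in (0:ℝ)..a, (b - s) ^ (-μ) * K b s * v s)
          - K1op μ K v a
          = (∫ s in (0:ℝ)..a, ((b - s) ^ (-μ) - (a - s) ^ (-μ)) * K b s * v s)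
            + (∫ s in (0:ℝ)..a, (a - s) ^ (-μ) * (K b s - K a s) * v s) := by
        rw [K1op, ← intervalIntegral.integral_sub If2a If1a,
          ← intervalIntegral.integral_add Ig1 Ig2]
        apply intervalIntegral.integral_congr
        intro s _
        ring
      rw [hsplit]; linarith [hdiff]
    -- bound on term T2 (Hölder term)
    have hT2 : |∫ s in (0:ℝ)..a, (a - s) ^ (-μ) * (K b s - K a s) * v s|
        ≤ Lip * (b - a) ^ κ * M / (1 - μ) := by
      have h1 := intervalIntegral.abs_integral_le_integral_abs (μ := volume)
        (f := fun s => (a - s) ^ (-μ) * (K b s - K a s) * v s) ha0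
      have h2 : (∫ s in (0:ℝ)..a, |(a - s) ^ (-μ) * (K b s - K a s) * v s|)
          ≤ ∫ s in (0:ℝ)..a, (a - s) ^ (-μ) * (Lip * (b - a) ^ κ) * M := by
        refine intervalIntegral.integral_mono_on ha0 Ig2.abs
          (((K1aux_II μ a 0 a hr).mul_const _).mul_const _) ?_
        intro s hs
        have hs1 : s ∈ Icc (0:ℝ) 1 := ⟨hs.1, hs.2.trans ha.2⟩
        have hx : (0:ℝ) ≤ (a - s) ^ (-μ) := Real.rpow_nonneg (by linarith [hs.2]) _
        rw [abs_mul, abs_mul, abs_of_nonneg hx]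
        have hK2 : |K b s - K a s| ≤ Lip * (b - a) ^ κ := by
          have := hKH b hb a ha s hs1
          rwa [abs_of_pos hΔ0] at this
        gcongr
        · exact hM s hs1
      have h3 : (∫ s in (0:ℝ)..a, (a - s) ^ (-μ) * (Lip * (b - a) ^ κ) * M)
          = a ^ (-μ + 1) / (-μ + 1) * (Lip * (b - a) ^ κ) * M := by
        rw [show (fun s => (a - s) ^ (-μ) * (Lip * (b - a) ^ κ) * M)
            = (fun s => (a - s) ^ (-μ) * ((Lip * (b - a) ^ κ) * M)) by
          funext s; ring]
        rw [intervalIntegral.integral_mul_const, K1aux_int μ a 0 a hr]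
        rw [sub_self, Real.zero_rpow (by linarith), sub_zero, sub_zero]
        ring
      have ha1 : a ^ (-μ + 1) ≤ 1 := Real.rpow_le_one ha0 ha.2 (by linarith)
      have hxnn : (0:ℝ) ≤ Lip * (b - a) ^ κ * M := by positivity
      calc |∫ s in (0:ℝ)..a, (a - s) ^ (-μ) * (K b s - K a s) * v s|
          ≤ a ^ (-μ + 1) / (-μ + 1) * (Lip * (b - a) ^ κ) * M := by
            rw [← h3]; exact h1.trans h2
        _ ≤ 1 / (1 - μ) * (Lip * (b - a) ^ κ) * M := by
            rw [he]
            gcongr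
            exact Real.rpow_le_one ha0 ha.2 (by linarith)
        _ = Lip * (b - a) ^ κ * M / (1 - μ) := by ring
    -- bound on term T1 (kernel-difference term)
    have hT1 : |∫ s in (0:ℝ)..a, ((b - s) ^ (-μ) - (a - s) ^ (-μ)) * K b s * v s|
        ≤ B * (b - a) ^ κ * M / (1 - μ) := by
      have h1 := intervalIntegral.abs_integral_le_integral_abs (μ := volume)
        (f := fun s => ((b - s) ^ (-μ) - (a - s) ^ (-μ)) * K b s * v s) ha0
      have Idom : IntervalIntegrable
          (fun s => ((a - s) ^ (-μ) - (b - s) ^ (-μ)) * B * M) volume 0 a :=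
        (((K1aux_II μ a 0 a hr).sub (K1aux_II μ b 0 a hr)).mul_const _).mul_const _
      have h2 : (∫ s in (0:ℝ)..a, |((b - s) ^ (-μ) - (a - s) ^ (-μ)) * K b s * v s|)
          ≤ ∫ s in (0:ℝ)..a, ((a - s) ^ (-μ) - (b - s) ^ (-μ)) * B * M := by
        refine intervalIntegral.integral_mono_ae_restrict ha0 Ig1.abs Idom ?_
        have hmem : ∀ᵐ s ∂(volume.restrict (Icc (0:ℝ) a)), s ∈ Icc (0:ℝ) a :=
          ae_restrict_mem measurableSet_Icc
        have hnea : ∀ᵐ s ∂(volume.restrict (Icc (0:ℝ) a)), s ≠ a := by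
          refine ae_restrict_of_ae ?_
          rw [ae_iff]
          have : {x : ℝ | ¬x ≠ a} = {a} := by ext x; simp
          rw [this]
          exact Real.volume_singleton
        filter_upwards [hmem, hnea] with s hs hsne
        have hs1 : s ∈ Icc (0:ℝ) 1 := ⟨hs.1, hs.2.trans ha.2⟩
        have hsa : s < a := lt_of_le_of_ne hs.2 hsne
        have hle : (b - s) ^ (-μ) ≤ (a - s) ^ (-μ) :=
          Real.rpow_le_rpow_of_nonpos (by linarith) (by linarith) (by linarith)
        rw [abs_mul, abs_mul, abs_of_nonpos (by linarith), neg_sub]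
        have hx : (0:ℝ) ≤ (a - s) ^ (-μ) - (b - s) ^ (-μ) := sub_nonneg.2 hle
        exact mul_le_mul (mul_le_mul le_rfl (hB b hb s hs1) (abs_nonneg _) hx)
          (hM s hs1) (abs_nonneg _) (mul_nonneg hx hBnn)
      have h3 : (∫ s in (0:ℝ)..a, ((a - s) ^ (-μ) - (b - s) ^ (-μ)) * B * M)
          = (a ^ (-μ + 1) - b ^ (-μ + 1) + (b - a) ^ (-μ + 1)) / (-μ + 1) * B * M := by
        rw [show (fun s => ((a - s) ^ (-μ) - (b - s) ^ (-μ)) * B * M)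
            = (fun s => ((a - s) ^ (-μ) - (b - s) ^ (-μ)) * (B * M)) by
          funext s; ring]
        rw [intervalIntegral.integral_mul_const,
          intervalIntegral.integral_sub (K1aux_II μ a 0 a hr) (K1aux_II μ b 0 a hr),
          K1aux_int μ a 0 a hr, K1aux_int μ b 0 a hr]
        rw [sub_self, Real.zero_rpow (by linarith), sub_zero, sub_zero]
        ring
      have hnum : a ^ (-μ + 1) - b ^ (-μ + 1) + (b - a) ^ (-μ + 1) ≤ (b - a) ^ κ := by
        have h4 : a ^ (-μ + 1) ≤ b ^ (-μ + 1) :=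
          Real.rpow_le_rpow ha0 hab.le (by linarith)
        have h5 : (b - a) ^ (-μ + 1) ≤ (b - a) ^ κ :=
          Real.rpow_le_rpow_of_exponent_ge hΔ0 hΔ1 (by linarith)
        linarith
      calc |∫ s in (0:ℝ)..a, ((b - s) ^ (-μ) - (a - s) ^ (-μ)) * K b s * v s|
          ≤ (a ^ (-μ + 1) - b ^ (-μ + 1) + (b - a) ^ (-μ + 1)) / (-μ + 1) * B * M := by
            rw [← h3]; exact h1.trans h2
        _ ≤ (b - a) ^ κ / (-μ + 1) * B * M := by gcongr; linarith
        _ = B * (b - a) ^ κ * M / (1 - μ) := by rw [he]; ring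
    -- bound on term T3 (tail term)
    have hT3 : |∫ s in a..b, (b - s) ^ (-μ) * K b s * v s|
        ≤ B * (b - a) ^ κ * M / (1 - μ) := by
      have h1 := intervalIntegral.abs_integral_le_integral_abs (μ := volume)
        (f := fun s => (b - s) ^ (-μ) * K b s * v s) hab.le
      have h2 : (∫ s in a..b, |(b - s) ^ (-μ) * K b s * v s|)
          ≤ ∫ s in a..b, (b - s) ^ (-μ) * B * M := by
        refine intervalIntegral.integral_mono_on hab.le If2ab.abs
          (((K1aux_II μ b a b hr).mul_const _).mul_const _) ?_
        intro s hs
        have hs1 : s ∈ Icc (0:ℝ) 1 := ⟨ha0.trans hs.1, hs.2.trans hb1⟩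
        have hx : (0:ℝ) ≤ (b - s) ^ (-μ) := Real.rpow_nonneg (by linarith [hs.2]) _
        rw [abs_mul, abs_mul, abs_of_nonneg hx]
        gcongr
        · exact hB b hb s hs1
        · exact hM s hs1
      have h3 : (∫ s in a..b, (b - s) ^ (-μ) * B * M)
          = (b - a) ^ (-μ + 1) / (-μ + 1) * B * M := by
        rw [show (fun s => (b - s) ^ (-μ) * B * M)
            = (fun s => (b - s) ^ (-μ) * (B * M)) by funext s; ring]
        rw [intervalIntegral.integral_mul_const, K1aux_int μ b a b hr]
        rw [sub_self, Real.zero_rpow (by linarith), sub_zero]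
        ring
      have h5 : (b - a) ^ (-μ + 1) ≤ (b - a) ^ κ :=
        Real.rpow_le_rpow_of_exponent_ge hΔ0 hΔ1 (by linarith)
      calc |∫ s in a..b, (b - s) ^ (-μ) * K b s * v s|
          ≤ (b - a) ^ (-μ + 1) / (-μ + 1) * B * M := by rw [← h3]; exact h1.trans h2
        _ ≤ (b - a) ^ κ / (-μ + 1) * B * M := by gcongr <;> linarith [h5]
        _ = B * (b - a) ^ κ * M / (1 - μ) := by rw [he]; ring
    -- combine
    have htri : |K1op μ K v b - K1op μ K v a|
        ≤ |∫ s in (0:ℝ)..a, ((b - s) ^ (-μ) - (a - s) ^ (-μ)) * K b s * v s|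
          + |∫ s in (0:ℝ)..a, (a - s) ^ (-μ) * (K b s - K a s) * v s|
          + |∫ s in a..b, (b - s) ^ (-μ) * K b s * v s| := by
      rw [split]
      exact (abs_add_le _ _).trans (by gcongr; exact abs_add_le _ _)
    have hfin : (Lip + 2 * B + 1) / (1 - μ) * (b - a) ^ κ * M
        = Lip * (b - a) ^ κ * M / (1 - μ) + B * (b - a) ^ κ * M / (1 - μ)
          + B * (b - a) ^ κ * M / (1 - μ) + (b - a) ^ κ * M / (1 - μ) := by
      field_simp
      ring
    have hlast : (0:ℝ) ≤ (b - a) ^ κ * M / (1 - μ) := by positivity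
    linarith
  rcases hne.lt_or_gt with h | h
  · rw [abs_sub_comm (K1op μ K v θ₁), abs_sub_comm θ₁ θ₂, abs_of_pos (sub_pos.2 h)]
    exact key θ₁ hθ₁ θ₂ hθ₂ h
  · rw [abs_of_pos (sub_pos.2 h)]
    exact key θ₂ hθ₂ θ₁ hθ₁ h
end

section
/- Let μ ∈ (0,1), κ ∈ (0, 1−μ), ε ∈ (0,1], and let K : [0,1]×[0,1] → ℝ be continuous and κ-Hölder in its first variable. Then there exists a constant C > 0 (depending only on μ, κ, ε and K) such that for every continuous v : [0,1] → ℝ and all θ₁, θ₂ ∈ [0,1] with θ₁ ≠ θ₂, |(𝒦₂v)(θ₁) − (𝒦₂v)(θ₂)| ≤ C |θ₁ − θ₂|^κ · max_{θ∈[0,1]} |v(θ)|. -/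
open MeasureTheory Set

/-- The weakly singular delay Volterra integral operator
`(𝒦₂v)(t) = ∫₀^{εt} (εt-τ)^{-μ} K(t,τ) v(τ) dτ`. -/
noncomputable def K2op (μ ε : ℝ) (K : ℝ → ℝ → ℝ) (v : ℝ → ℝ) (t : ℝ) : ℝ :=
  ∫ τ in (0:ℝ)..(ε * t), (ε * t - τ) ^ (-μ) * K t τ * v τ

/-!
For `θ₂ < θ₁` put `a = εθ₂ ≤ b = εθ₁`. The increment `(𝒦₂v)(θ₁) - (𝒦₂v)(θ₂)` splits into
* `∫₀ᵃ ((b-τ)^{-μ} - (a-τ)^{-μ}) K(θ₁,τ) v(τ) dτ`: the kernel difference has a sign, so its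
  `L¹` mass telescopes to `(aˢ - bˢ + (b-a)ˢ)/s ≤ (b-a)ˢ/s` with `s = 1 - μ`;
* `∫₀ᵃ (a-τ)^{-μ} (K(θ₁,τ) - K(θ₂,τ)) v(τ) dτ`, of size `L |θ₁-θ₂|^κ ‖v‖ aˢ/s`;
* the tail `∫ₐᵇ (b-τ)^{-μ} K(θ₁,τ) v(τ) dτ`, of size `‖K‖ ‖v‖ (b-a)ˢ/s`.
Since `b - a ≤ |θ₁ - θ₂| ≤ 1` and `κ ≤ s`, each term is `O(|θ₁ - θ₂|^κ ‖v‖)`.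
-/

lemma abs_integral_mul_le_mul_integral_abs {w g : ℝ → ℝ} {p q B : ℝ} (hpq : p ≤ q)
    (hw : IntervalIntegrable w volume p q) (hB : ∀ t ∈ Icc p q, |g t| ≤ B) :
    |∫ t in p..q, w t * g t| ≤ B * ∫ t in p..q, |w t| := by
  rw [← Real.norm_eq_abs, ← intervalIntegral.integral_const_mul]
  refine intervalIntegral.norm_integral_le_of_norm_le hpq (ae_of_all _ fun t ht => ?_)
    (hw.abs.const_mul B)
  rw [Real.norm_eq_abs, abs_mul, mul_comm]
  exact mul_le_mul_of_nonneg_right (hB t (Ioc_subset_Icc_self ht)) (abs_nonneg _)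

section SingularKernel

variable {μ : ℝ}

lemma intervalIntegrable_sub_rpow_neg (hμ : μ < 1) (c p q : ℝ) :
    IntervalIntegrable (fun τ => (c - τ) ^ (-μ)) volume p q := by
  simpa using (intervalIntegral.intervalIntegrable_rpow' (a := c - p) (b := c - q)
    (by linarith : (-1:ℝ) < -μ)).comp_sub_left c

lemma integral_sub_rpow_neg (hμ : μ < 1) (c p q : ℝ) :
    ∫ τ in p..q, (c - τ) ^ (-μ) = ((c - p) ^ (1 - μ) - (c - q) ^ (1 - μ)) / (1 - μ) := by
  rw [intervalIntegral.integral_comp_sub_left (fun x : ℝ => x ^ (-μ)) c,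
    integral_rpow (Or.inl (by linarith)), neg_add_eq_sub]

lemma integral_abs_sub_rpow_neg (hμ : μ < 1) {p c : ℝ} (hpc : p ≤ c) :
    ∫ τ in p..c, |(c - τ) ^ (-μ)| = (c - p) ^ (1 - μ) / (1 - μ) := by
  have hnonneg : ∀ τ ∈ uIcc p c, |(c - τ) ^ (-μ)| = (c - τ) ^ (-μ) := fun τ hτ => by
    rw [uIcc_of_le hpc] at hτ
    exact abs_of_nonneg (Real.rpow_nonneg (sub_nonneg.2 hτ.2) _)
  rw [intervalIntegral.integral_congr hnonneg, integral_sub_rpow_neg hμ, sub_self,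
    Real.zero_rpow (by linarith), sub_zero]

lemma integral_abs_sub_rpow_neg_sub_le (hμ : μ ∈ Ioo 0 1) {a b : ℝ} (ha : 0 ≤ a)
    (hab : a ≤ b) :
    ∫ τ in 0..a, |(b - τ) ^ (-μ) - (a - τ) ^ (-μ)| ≤ (b - a) ^ (1 - μ) / (1 - μ) := by
  have hw := intervalIntegrable_sub_rpow_neg hμ.2
  calc ∫ τ in 0..a, |(b - τ) ^ (-μ) - (a - τ) ^ (-μ)|
      ≤ ∫ τ in 0..a, ((a - τ) ^ (-μ) - (b - τ) ^ (-μ)) := by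
        -- equality holds only on `Ioo 0 a`: at `τ = a` the junk value `0 ^ (-μ) = 0` flips the sign
        refine intervalIntegral.integral_mono_on_of_le_Ioo ha ((hw b 0 a).sub (hw a 0 a)).abs
          ((hw a 0 a).sub (hw b 0 a)) fun τ hτ => ?_
        rw [abs_sub_comm, abs_of_nonneg (sub_nonneg.2 (Real.rpow_le_rpow_of_nonpos
          (sub_pos.2 hτ.2) (by linarith) (by linarith [hμ.1])))]
    _ = (a ^ (1 - μ) - b ^ (1 - μ) + (b - a) ^ (1 - μ)) / (1 - μ) := by
        rw [intervalIntegral.integral_sub (hw a 0 a) (hw b 0 a), integral_sub_rpow_neg hμ.2,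
          integral_sub_rpow_neg hμ.2, sub_self, Real.zero_rpow (by linarith [hμ.2])]
        simp only [sub_zero]
        ring
    _ ≤ (b - a) ^ (1 - μ) / (1 - μ) := by
        have : a ^ (1 - μ) ≤ b ^ (1 - μ) := Real.rpow_le_rpow ha hab (by linarith [hμ.2])
        gcongr
        · linarith [hμ.2]
        · linarith

end SingularKernel

lemma abs_integral_rpow_neg_mul_sub_le {μ a b B E : ℝ} {g₁ g₂ : ℝ → ℝ} (hμ : μ ∈ Ioo 0 1)
    (ha : 0 ≤ a) (hab : a ≤ b) (hg₁ : ContinuousOn g₁ (Icc 0 b))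
    (hg₂ : ContinuousOn g₂ (Icc 0 a)) (hB : ∀ t ∈ Icc 0 b, |g₁ t| ≤ B)
    (hE : ∀ t ∈ Icc 0 a, |g₁ t - g₂ t| ≤ E) :
    |(∫ τ in 0..b, (b - τ) ^ (-μ) * g₁ τ) - ∫ τ in 0..a, (a - τ) ^ (-μ) * g₂ τ|
      ≤ (2 * B * (b - a) ^ (1 - μ) + E * a ^ (1 - μ)) / (1 - μ) := by
  have hw := intervalIntegrable_sub_rpow_neg hμ.2
  have hB0 : 0 ≤ B := (abs_nonneg _).trans (hB 0 ⟨le_rfl, ha.trans hab⟩)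
  have hIcc : Icc 0 a ⊆ Icc 0 b := Icc_subset_Icc_right hab
  have hg₁' : ContinuousOn g₁ (uIcc 0 a) := uIcc_of_le ha ▸ hg₁.mono hIcc
  have hg₂' : ContinuousOn g₂ (uIcc 0 a) := uIcc_of_le ha ▸ hg₂
  have hsplit : (∫ τ in 0..b, (b - τ) ^ (-μ) * g₁ τ) - ∫ τ in 0..a, (a - τ) ^ (-μ) * g₂ τ
      = (∫ τ in 0..a, ((b - τ) ^ (-μ) - (a - τ) ^ (-μ)) * g₁ τ)
        + (∫ τ in 0..a, (a - τ) ^ (-μ) * (g₁ τ - g₂ τ))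
        + ∫ τ in a..b, (b - τ) ^ (-μ) * g₁ τ := by
    have hb : IntervalIntegrable (fun τ => (b - τ) ^ (-μ) * g₁ τ) volume 0 a :=
      (hw b 0 a).mul_continuousOn hg₁'
    have hb' : IntervalIntegrable (fun τ => (b - τ) ^ (-μ) * g₁ τ) volume a b :=
      (hw b a b).mul_continuousOn (uIcc_of_le hab ▸ hg₁.mono (Icc_subset_Icc_left ha))
    have hd : IntervalIntegrable (fun τ => (a - τ) ^ (-μ) * (g₁ τ - g₂ τ)) volume 0 a :=
      (hw a 0 a).mul_continuousOn (hg₁'.sub hg₂')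
    have hcombine : (∫ τ in 0..a, ((b - τ) ^ (-μ) - (a - τ) ^ (-μ)) * g₁ τ)
          + (∫ τ in 0..a, (a - τ) ^ (-μ) * (g₁ τ - g₂ τ))
        = (∫ τ in 0..a, (b - τ) ^ (-μ) * g₁ τ) - ∫ τ in 0..a, (a - τ) ^ (-μ) * g₂ τ := by
      rw [← intervalIntegral.integral_add
          (((hw b 0 a).sub (hw a 0 a)).mul_continuousOn hg₁') hd,
        ← intervalIntegral.integral_sub hb ((hw a 0 a).mul_continuousOn hg₂')]
      congr 1 with τ
      ring
    rw [hcombine, ← intervalIntegral.integral_add_adjacent_intervals hb hb']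
    ring
  have hnear : |∫ τ in 0..a, ((b - τ) ^ (-μ) - (a - τ) ^ (-μ)) * g₁ τ|
      ≤ B * ((b - a) ^ (1 - μ) / (1 - μ)) :=
    (abs_integral_mul_le_mul_integral_abs ha ((hw b 0 a).sub (hw a 0 a))
      fun t ht => hB t (hIcc ht)).trans
      (mul_le_mul_of_nonneg_left (integral_abs_sub_rpow_neg_sub_le hμ ha hab) hB0)
  have hdensity : |∫ τ in 0..a, (a - τ) ^ (-μ) * (g₁ τ - g₂ τ)|
      ≤ E * (a ^ (1 - μ) / (1 - μ)) := by
    simpa only [integral_abs_sub_rpow_neg hμ.2 ha, sub_zero] using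
      abs_integral_mul_le_mul_integral_abs ha (hw a 0 a) hE
  have htail : |∫ τ in a..b, (b - τ) ^ (-μ) * g₁ τ|
      ≤ B * ((b - a) ^ (1 - μ) / (1 - μ)) := by
    rw [← integral_abs_sub_rpow_neg hμ.2 hab]
    exact abs_integral_mul_le_mul_integral_abs hab (hw b a b)
      fun t ht => hB t ⟨ha.trans ht.1, ht.2⟩
  rw [hsplit, ← Real.norm_eq_abs]
  refine norm_add₃_le.trans ?_
  simp only [Real.norm_eq_abs]
  calc _ ≤ B * ((b - a) ^ (1 - μ) / (1 - μ)) + E * (a ^ (1 - μ) / (1 - μ))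
          + B * ((b - a) ^ (1 - μ) / (1 - μ)) := by gcongr
    _ = _ := by ring

lemma K2op_eq (μ ε : ℝ) (K : ℝ → ℝ → ℝ) (v : ℝ → ℝ) (t : ℝ) :
    K2op μ ε K v t = ∫ τ in 0..ε * t, (ε * t - τ) ^ (-μ) * (K t τ * v τ) := by
  simp only [K2op, mul_assoc]

lemma abs_K2op_sub_le_of_lt {μ κ ε M Lip V θ₁ θ₂ : ℝ} {K : ℝ → ℝ → ℝ} {v : ℝ → ℝ}
    (hμ : μ ∈ Ioo 0 1) (hκ : κ ≤ 1 - μ) (hε₀ : 0 ≤ ε) (hε₁ : ε ≤ 1)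
    (hK : ∀ θ ∈ Icc (0:ℝ) 1, ContinuousOn (K θ) (Icc 0 1))
    (hKM : ∀ θ ∈ Icc (0:ℝ) 1, ∀ s ∈ Icc (0:ℝ) 1, |K θ s| ≤ M)
    (hKH : ∀ s ∈ Icc (0:ℝ) 1, |K θ₁ s - K θ₂ s| ≤ Lip * |θ₁ - θ₂| ^ κ)
    (hv : ContinuousOn v (Icc 0 1)) (hV : ∀ s ∈ Icc (0:ℝ) 1, |v s| ≤ V)
    (hθ₂ : 0 ≤ θ₂) (hθ : θ₂ < θ₁) (hθ₁ : θ₁ ≤ 1) :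
    |K2op μ ε K v θ₁ - K2op μ ε K v θ₂|
      ≤ (2 * M + Lip) / (1 - μ) * |θ₁ - θ₂| ^ κ * V := by
  have h₁ : θ₁ ∈ Icc (0:ℝ) 1 := ⟨hθ₂.trans hθ.le, hθ₁⟩
  have h₂ : θ₂ ∈ Icc (0:ℝ) 1 := ⟨hθ₂, hθ.le.trans hθ₁⟩
  have h0 : (0:ℝ) ∈ Icc (0:ℝ) 1 := ⟨le_rfl, zero_le_one⟩
  have hM : 0 ≤ M := (abs_nonneg _).trans (hKM 0 h0 0 h0)
  have hV0 : 0 ≤ V := (abs_nonneg _).trans (hV 0 h0)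
  have hLip : 0 ≤ Lip * |θ₁ - θ₂| ^ κ := (abs_nonneg _).trans (hKH 0 h0)
  have ha : 0 ≤ ε * θ₂ := mul_nonneg hε₀ hθ₂
  have hab : ε * θ₂ ≤ ε * θ₁ := mul_le_mul_of_nonneg_left hθ.le hε₀
  have hb : ε * θ₁ ≤ 1 := mul_le_one₀ hε₁ h₁.1 hθ₁
  have hg : ∀ θ ∈ Icc (0:ℝ) 1, ContinuousOn (fun τ => K θ τ * v τ) (Icc 0 1) :=
    fun θ hθ => (hK θ hθ).mul hv
  have key := abs_integral_rpow_neg_mul_sub_le hμ ha hab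
    ((hg θ₁ h₁).mono (Icc_subset_Icc_right hb))
    ((hg θ₂ h₂).mono (Icc_subset_Icc_right (hab.trans hb)))
    (B := M * V) (fun t ht => by
      have ht' : t ∈ Icc (0:ℝ) 1 := ⟨ht.1, ht.2.trans hb⟩
      rw [abs_mul]
      exact mul_le_mul (hKM θ₁ h₁ t ht') (hV t ht') (abs_nonneg _) hM)
    (E := Lip * |θ₁ - θ₂| ^ κ * V) (fun t ht => by
      have ht' : t ∈ Icc (0:ℝ) 1 := ⟨ht.1, ht.2.trans (hab.trans hb)⟩
      rw [← sub_mul, abs_mul]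
      exact mul_le_mul (hKH t ht') (hV t ht') (abs_nonneg _) hLip)
  rw [K2op_eq, K2op_eq]
  refine key.trans ?_
  have hincr : (ε * θ₁ - ε * θ₂) ^ (1 - μ) ≤ |θ₁ - θ₂| ^ κ := calc
    _ ≤ |θ₁ - θ₂| ^ (1 - μ) := by
      rw [abs_of_pos (sub_pos.2 hθ), ← mul_sub]
      exact Real.rpow_le_rpow (by nlinarith) (by nlinarith) (by linarith [hμ.2])
    _ ≤ |θ₁ - θ₂| ^ κ := Real.rpow_le_rpow_of_exponent_ge (abs_pos.2 (sub_ne_zero.2 hθ.ne'))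
      (by rw [abs_of_pos (sub_pos.2 hθ)]; linarith) hκ
  have h1μ : 0 < 1 - μ := by linarith [hμ.2]
  have hstart : (ε * θ₂) ^ (1 - μ) ≤ 1 := Real.rpow_le_one ha (hab.trans hb) h1μ.le
  calc _ ≤ (2 * (M * V) * |θ₁ - θ₂| ^ κ + Lip * |θ₁ - θ₂| ^ κ * V * 1) / (1 - μ) := by
        gcongr
    _ = _ := by ring

theorem K2_holder_increment_bound_general (μ κ ε : ℝ) (hμ : μ ∈ Ioo (0:ℝ) 1)
    (hκ : κ ∈ Ioo (0:ℝ) (1 - μ)) (hε : ε ∈ Ioc (0:ℝ) 1) (K : ℝ → ℝ → ℝ)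
    (hKcont : ContinuousOn (fun p : ℝ × ℝ => K p.1 p.2) (Icc 0 1 ×ˢ Icc 0 1))
    (Lip : ℝ)
    (hKH : ∀ θ₁ ∈ Icc (0:ℝ) 1, ∀ θ₂ ∈ Icc (0:ℝ) 1, ∀ s ∈ Icc (0:ℝ) 1,
      |K θ₁ s - K θ₂ s| ≤ Lip * |θ₁ - θ₂| ^ κ) :
    ∃ C > (0:ℝ), ∀ v : ℝ → ℝ, ContinuousOn v (Icc (0:ℝ) 1) →
      ∀ θ₁ ∈ Icc (0:ℝ) 1, ∀ θ₂ ∈ Icc (0:ℝ) 1, θ₁ ≠ θ₂ →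
      |K2op μ ε K v θ₁ - K2op μ ε K v θ₂|
        ≤ C * |θ₁ - θ₂| ^ κ * sSup ((fun θ => |v θ|) '' Icc (0:ℝ) 1) := by
  have h0 : (0:ℝ) ∈ Icc (0:ℝ) 1 := ⟨le_rfl, zero_le_one⟩
  have h1 : (1:ℝ) ∈ Icc (0:ℝ) 1 := ⟨zero_le_one, le_rfl⟩
  obtain ⟨M, hM⟩ := (isCompact_Icc.prod isCompact_Icc).exists_bound_of_continuousOn hKcont
  have hKM : ∀ θ ∈ Icc (0:ℝ) 1, ∀ s ∈ Icc (0:ℝ) 1, |K θ s| ≤ M :=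
    fun θ hθ s hs => hM (θ, s) ⟨hθ, hs⟩
  have hM0 : 0 ≤ M := (abs_nonneg _).trans (hKM 0 h0 0 h0)
  have hLip : 0 ≤ Lip := by simpa using (abs_nonneg _).trans (hKH 0 h0 1 h1 0 h0)
  have h1μ : 0 < 1 - μ := by linarith [hμ.2]
  refine ⟨(2 * M + Lip + 1) / (1 - μ), by positivity, fun v hv => ?_⟩
  have hV : ∀ s ∈ Icc (0:ℝ) 1, |v s| ≤ sSup ((fun θ => |v θ|) '' Icc (0:ℝ) 1) :=
    fun s hs => le_csSup (isCompact_Icc.image_of_continuousOn hv.abs).bddAbove ⟨s, hs, rfl⟩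
  intro θ₁ h₁ θ₂ h₂ hne
  wlog hlt : θ₂ < θ₁ generalizing θ₁ θ₂
  · rw [abs_sub_comm, abs_sub_comm θ₁]
    exact this θ₂ h₂ θ₁ h₁ hne.symm (hne.lt_or_gt.resolve_right hlt)
  have hK : ∀ θ ∈ Icc (0:ℝ) 1, ContinuousOn (K θ) (Icc 0 1) := fun θ hθ =>
    hKcont.comp (continuousOn_const.prodMk continuousOn_id) fun _ hτ => ⟨hθ, hτ⟩
  refine (abs_K2op_sub_le_of_lt hμ hκ.2.le hε.1.le hε.2 hK hKM (hKH θ₁ h₁ θ₂ h₂) hv hV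
    h₂.1 hlt h₁.2).trans ?_
  have hV0 := (abs_nonneg _).trans (hV 0 h0)
  gcongr ?_ * _ * _
  exact div_le_div_of_nonneg_right (by linarith) h1μ.le

/-- Hölder-type bound for the weakly singular delay Volterra operator `𝒦₂`:
for `μ ∈ (0,1)`, `κ ∈ (0,1-μ)`, `ε ∈ (0,1]`, and `K` continuous and `κ`-Hölder
in its first variable, there is `C > 0` with
`|(𝒦₂v)(θ₁) - (𝒦₂v)(θ₂)| ≤ C |θ₁-θ₂|^κ · max |v|` for all continuous `v`. -/
theorem K2_holder_increment_bound (μ κ ε : ℝ) (hμ : μ ∈ Ioo (0:ℝ) 1)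
    (hκ : κ ∈ Ioo (0:ℝ) (1 - μ)) (hε : ε ∈ Ioc (0:ℝ) 1) (K : ℝ → ℝ → ℝ)
    (hKcont : ContinuousOn (fun p : ℝ × ℝ => K p.1 p.2) (Icc 0 1 ×ˢ Icc 0 1))
    (Lip : ℝ) (hLip : 0 ≤ Lip)
    (hKH : ∀ θ₁ ∈ Icc (0:ℝ) 1, ∀ θ₂ ∈ Icc (0:ℝ) 1, ∀ s ∈ Icc (0:ℝ) 1,
      |K θ₁ s - K θ₂ s| ≤ Lip * |θ₁ - θ₂| ^ κ) :
    ∃ C > (0:ℝ), ∀ v : ℝ → ℝ, ContinuousOn v (Icc (0:ℝ) 1) →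
      ∀ θ₁ ∈ Icc (0:ℝ) 1, ∀ θ₂ ∈ Icc (0:ℝ) 1, θ₁ ≠ θ₂ →
      |K2op μ ε K v θ₁ - K2op μ ε K v θ₂|
        ≤ C * |θ₁ - θ₂| ^ κ * sSup ((fun θ => |v θ|) '' Icc (0:ℝ) 1) :=
  K2_holder_increment_bound_general μ κ ε hμ hκ hε K hKcont Lip hKH
end

section
/- Let μ ∈ (0,1), κ ∈ (0, 1−μ), ε ∈ (0,1], and let K : [0,1]×[0,1] → ℝ be continuous and κ-Hölder in its first variable. Then there exists a constant C > 0 such that for every continuous v : [0,1] → ℝ, the function 𝒦₂v is κ-Hölder continuous on [0,1] and ‖𝒦₂v‖_{0,κ} ≤ C · max_{θ∈[0,1]} |v(θ)|. -/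
open MeasureTheory Set

open intervalIntegral in
lemma sing_intble {μ : ℝ} (hμ : μ < 1) (a b c : ℝ) :
    IntervalIntegrable (fun τ => (c - τ) ^ (-μ)) volume a b := by
  have h : IntervalIntegrable (fun x : ℝ => x ^ (-μ)) volume (c - a) (c - b) :=
    intervalIntegral.intervalIntegrable_rpow' (by linarith)
  simpa using h.comp_sub_left c

lemma sing_int {μ : ℝ} (hμ1 : μ < 1) (a b c : ℝ) :
    ∫ τ in a..b, (c - τ) ^ (-μ) = ((c - a) ^ (1 - μ) - (c - b) ^ (1 - μ)) / (1 - μ) := by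
  rw [intervalIntegral.integral_comp_sub_left (fun x : ℝ => x ^ (-μ)) c,
    integral_rpow (Or.inl (by linarith))]
  ring_nf

lemma key_holder {μ κ ε : ℝ} (hμ0 : 0 < μ) (hμ1 : μ < 1) (hκ0 : 0 < κ) (hκν : κ < 1 - μ)
    (hε0 : 0 < ε) (hε1 : ε ≤ 1) {K : ℝ → ℝ → ℝ} {v : ℝ → ℝ}
    {MK Mv Lip : ℝ} (hMK0 : 0 ≤ MK) (hMv0 : 0 ≤ Mv) (hLip : 0 ≤ Lip)
    (hKb : ∀ t ∈ Icc (0:ℝ) 1, ∀ s ∈ Icc (0:ℝ) 1, |K t s| ≤ MK)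
    (hKH : ∀ θ₁ ∈ Icc (0:ℝ) 1, ∀ θ₂ ∈ Icc (0:ℝ) 1, ∀ s ∈ Icc (0:ℝ) 1,
      |K θ₁ s - K θ₂ s| ≤ Lip * |θ₁ - θ₂| ^ κ)
    (hKc : ∀ t ∈ Icc (0:ℝ) 1, ContinuousOn (K t) (Icc 0 1))
    (hvb : ∀ s ∈ Icc (0:ℝ) 1, |v s| ≤ Mv)
    (hvc : ContinuousOn v (Icc 0 1))
    {θ₁ θ₂ : ℝ} (h1 : θ₁ ∈ Icc (0:ℝ) 1) (h2 : θ₂ ∈ Icc (0:ℝ) 1) (hlt : θ₂ < θ₁) :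
    |K2op μ ε K v θ₁ - K2op μ ε K v θ₂|
      ≤ ((2 * MK + Lip) * Mv / (1 - μ)) * (θ₁ - θ₂) ^ κ := by
  have hν : (0:ℝ) < 1 - μ := by linarith
  set a := ε * θ₂ with ha_def
  set b := ε * θ₁ with hb_def
  have h0a : 0 ≤ a := mul_nonneg hε0.le h2.1
  have hab : a < b := by
    have := h2.1
    apply mul_lt_mul_of_pos_left hlt hε0
  have hb1 : b ≤ 1 := by
    have : ε * θ₁ ≤ 1 * 1 := mul_le_mul hε1 h1.2 (le_trans h2.1 hlt.le) zero_le_one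
    simpa using this
  have ha1 : a ≤ 1 := le_trans hab.le hb1
  have hsub1 : Icc a b ⊆ Icc (0:ℝ) 1 := Icc_subset_Icc h0a hb1
  have hsub0 : Icc (0:ℝ) a ⊆ Icc (0:ℝ) 1 := Icc_subset_Icc le_rfl ha1
  -- continuity of K t · * v
  have hc1 : ContinuousOn (fun τ => K θ₁ τ * v τ) (Icc (0:ℝ) 1) := (hKc θ₁ h1).mul hvc
  have hc2 : ContinuousOn (fun τ => K θ₂ τ * v τ) (Icc (0:ℝ) 1) := (hKc θ₂ h2).mul hvc
  -- integrability
  have I1 : IntervalIntegrable (fun τ => (b - τ) ^ (-μ) * (K θ₁ τ * v τ)) volume 0 a :=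
    (sing_intble hμ1 0 a b).mul_continuousOn
      (hc1.mono (by rw [uIcc_of_le h0a]; exact hsub0))
  have I1' : IntervalIntegrable (fun τ => (b - τ) ^ (-μ) * (K θ₁ τ * v τ)) volume a b :=
    (sing_intble hμ1 a b b).mul_continuousOn
      (hc1.mono (by rw [uIcc_of_le hab.le]; exact hsub1))
  have I2 : IntervalIntegrable (fun τ => (a - τ) ^ (-μ) * (K θ₂ τ * v τ)) volume 0 a :=
    (sing_intble hμ1 0 a a).mul_continuousOn
      (hc2.mono (by rw [uIcc_of_le h0a]; exact hsub0))
  -- splitting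
  have e1 : K2op μ ε K v θ₁ = ∫ τ in (0:ℝ)..b, (b - τ) ^ (-μ) * (K θ₁ τ * v τ) := by
    simp only [K2op, mul_assoc, ← hb_def]
  have e2 : K2op μ ε K v θ₂ = ∫ τ in (0:ℝ)..a, (a - τ) ^ (-μ) * (K θ₂ τ * v τ) := by
    simp only [K2op, mul_assoc, ← ha_def]
  have hsplit : K2op μ ε K v θ₁ - K2op μ ε K v θ₂
      = (∫ τ in (0:ℝ)..a, ((b - τ) ^ (-μ) * (K θ₁ τ * v τ)
          - (a - τ) ^ (-μ) * (K θ₂ τ * v τ)))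
        + ∫ τ in a..b, (b - τ) ^ (-μ) * (K θ₁ τ * v τ) := by
    rw [e1, e2, intervalIntegral.integral_sub I1 I2,
      ← intervalIntegral.integral_add_adjacent_intervals I1 I1']
    ring
  set d := θ₁ - θ₂ with hd_def
  have hd0 : 0 < d := sub_pos.2 hlt
  have hd1 : d ≤ 1 := by
    have := h1.2; have := h2.1; simp only [hd_def]; linarith
  have hdκ0 : 0 ≤ d ^ κ := Real.rpow_nonneg hd0.le κ
  -- Term C bound
  have TC : |∫ τ in a..b, (b - τ) ^ (-μ) * (K θ₁ τ * v τ)|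
      ≤ (MK * Mv) * ((b - a) ^ (1 - μ) / (1 - μ)) := by
    calc |∫ τ in a..b, (b - τ) ^ (-μ) * (K θ₁ τ * v τ)|
        ≤ ∫ τ in a..b, |(b - τ) ^ (-μ) * (K θ₁ τ * v τ)| :=
          intervalIntegral.abs_integral_le_integral_abs hab.le
      _ ≤ ∫ τ in a..b, (b - τ) ^ (-μ) * (MK * Mv) := by
          apply intervalIntegral.integral_mono_on hab.le I1'.abs
            ((sing_intble hμ1 a b b).mul_const _)
          intro τ hτ
          have hbt : 0 ≤ b - τ := by linarith [hτ.2]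
          have hr0 : 0 ≤ (b - τ) ^ (-μ) := Real.rpow_nonneg hbt _
          rw [abs_mul, abs_of_nonneg hr0, abs_mul]
          apply mul_le_mul_of_nonneg_left _ hr0
          exact mul_le_mul (hKb θ₁ h1 τ (hsub1 hτ)) (hvb τ (hsub1 hτ)) (abs_nonneg _) hMK0
      _ = (MK * Mv) * ((b - a) ^ (1 - μ) / (1 - μ)) := by
          rw [intervalIntegral.integral_mul_const, sing_int hμ1, sub_self,
            Real.zero_rpow (by linarith), sub_zero]
          ring
  -- Term A bound
  have TA : |∫ τ in (0:ℝ)..a, ((b - τ) ^ (-μ) * (K θ₁ τ * v τ)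
        - (a - τ) ^ (-μ) * (K θ₂ τ * v τ))|
      ≤ ((a ^ (1-μ) - (b ^ (1-μ) - (b-a) ^ (1-μ))) / (1-μ)) * (MK * Mv)
        + (a ^ (1-μ) / (1-μ)) * ((Lip * d ^ κ) * Mv) := by
    have IΦ : IntervalIntegrable (fun τ => ((a - τ) ^ (-μ) - (b - τ) ^ (-μ)) * (MK * Mv)
        + (a - τ) ^ (-μ) * ((Lip * d ^ κ) * Mv)) volume 0 a :=
      (((sing_intble hμ1 0 a a).sub (sing_intble hμ1 0 a b)).mul_const _).add
        ((sing_intble hμ1 0 a a).mul_const _)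
    calc |∫ τ in (0:ℝ)..a, ((b - τ) ^ (-μ) * (K θ₁ τ * v τ)
          - (a - τ) ^ (-μ) * (K θ₂ τ * v τ))|
        ≤ ∫ τ in (0:ℝ)..a, |(b - τ) ^ (-μ) * (K θ₁ τ * v τ)
            - (a - τ) ^ (-μ) * (K θ₂ τ * v τ)| :=
          intervalIntegral.abs_integral_le_integral_abs h0a
      _ ≤ ∫ τ in (0:ℝ)..a, (((a - τ) ^ (-μ) - (b - τ) ^ (-μ)) * (MK * Mv)
            + (a - τ) ^ (-μ) * ((Lip * d ^ κ) * Mv)) := by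
          apply intervalIntegral.integral_mono_ae_restrict h0a (I1.sub I2).abs IΦ
          have hne : ∀ᵐ τ : ℝ ∂(volume.restrict (Icc (0:ℝ) a)), τ ≠ a := by
            rw [ae_iff]
            have hset : {x : ℝ | ¬ x ≠ a} = {a} := by ext x; simp
            rw [hset, Measure.restrict_apply (measurableSet_singleton a)]
            exact measure_mono_null inter_subset_left Real.volume_singleton
          filter_upwards [ae_restrict_mem measurableSet_Icc, hne] with τ hτ hτa
          have hta : 0 < a - τ := lt_of_le_of_ne (by linarith [hτ.2]) (by
            intro h; exact hτa (by linarith))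
          have htb : 0 < b - τ := by linarith
          have hmono : (b - τ) ^ (-μ) ≤ (a - τ) ^ (-μ) :=
            Real.rpow_le_rpow_of_nonpos hta (by linarith) (by linarith)
          have hra : 0 ≤ (a - τ) ^ (-μ) := Real.rpow_nonneg hta.le _
          have hτ01 : τ ∈ Icc (0:ℝ) 1 := hsub0 hτ
          have hid : (b - τ) ^ (-μ) * (K θ₁ τ * v τ) - (a - τ) ^ (-μ) * (K θ₂ τ * v τ)
              = ((b - τ) ^ (-μ) - (a - τ) ^ (-μ)) * (K θ₁ τ * v τ)
                + (a - τ) ^ (-μ) * ((K θ₁ τ - K θ₂ τ) * v τ) := by ring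
          rw [hid]
          refine le_trans (abs_add_le _ _) (add_le_add ?_ ?_)
          · rw [abs_mul, abs_sub_comm, abs_of_nonneg (by linarith), abs_mul]
            apply mul_le_mul_of_nonneg_left _ (by linarith)
            exact mul_le_mul (hKb θ₁ h1 τ hτ01) (hvb τ hτ01) (abs_nonneg _) hMK0
          · rw [abs_mul, abs_of_nonneg hra, abs_mul]
            apply mul_le_mul_of_nonneg_left _ hra
            have hK : |K θ₁ τ - K θ₂ τ| ≤ Lip * d ^ κ := by
              have := hKH θ₁ h1 θ₂ h2 τ hτ01
              rwa [abs_of_pos hd0] at this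
            exact mul_le_mul hK (hvb τ hτ01) (abs_nonneg _)
              (mul_nonneg hLip hdκ0)
      _ = ((a ^ (1-μ) - (b ^ (1-μ) - (b-a) ^ (1-μ))) / (1-μ)) * (MK * Mv)
            + (a ^ (1-μ) / (1-μ)) * ((Lip * d ^ κ) * Mv) := by
          rw [intervalIntegral.integral_add
              (((sing_intble hμ1 0 a a).sub (sing_intble hμ1 0 a b)).mul_const _)
              ((sing_intble hμ1 0 a a).mul_const _),
            intervalIntegral.integral_mul_const, intervalIntegral.integral_mul_const,
            intervalIntegral.integral_sub (sing_intble hμ1 0 a a) (sing_intble hμ1 0 a b),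
            sing_int hμ1, sing_int hμ1, sub_self, sub_zero, sub_zero,
            Real.zero_rpow (by linarith : (1:ℝ) - μ ≠ 0), sub_zero]
          ring
  -- combine
  have hba : (b - a) ^ (1 - μ) ≤ d ^ κ := by
    have h1' : (b - a) ^ (1-μ) ≤ d ^ (1-μ) := by
      apply Real.rpow_le_rpow (by linarith) _ hν.le
      have : b - a = ε * d := by simp only [hb_def, ha_def, hd_def]; ring
      rw [this]
      nlinarith
    refine h1'.trans (Real.rpow_le_rpow_of_exponent_ge hd0 hd1 (by linarith))
  have haν1 : a ^ (1 - μ) ≤ 1 := Real.rpow_le_one h0a ha1 hν.le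
  have habν : a ^ (1 - μ) ≤ b ^ (1 - μ) := Real.rpow_le_rpow h0a hab.le hν.le
  have hba0 : 0 ≤ (b - a) ^ (1 - μ) := Real.rpow_nonneg (by linarith) _
  have haν0 : 0 ≤ a ^ (1 - μ) := Real.rpow_nonneg h0a _
  rw [hsplit]
  calc |(∫ τ in (0:ℝ)..a, ((b - τ) ^ (-μ) * (K θ₁ τ * v τ)
          - (a - τ) ^ (-μ) * (K θ₂ τ * v τ)))
        + ∫ τ in a..b, (b - τ) ^ (-μ) * (K θ₁ τ * v τ)|
      ≤ ((a ^ (1-μ) - (b ^ (1-μ) - (b-a) ^ (1-μ))) / (1-μ)) * (MK * Mv)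
          + (a ^ (1-μ) / (1-μ)) * ((Lip * d ^ κ) * Mv)
          + (MK * Mv) * ((b - a) ^ (1 - μ) / (1 - μ)) :=
        le_trans (abs_add_le _ _) (add_le_add TA TC)
    _ ≤ (d ^ κ / (1-μ)) * (MK * Mv) + ((1:ℝ) / (1-μ)) * ((Lip * d ^ κ) * Mv)
          + (MK * Mv) * (d ^ κ / (1 - μ)) := by
        have hMKMv : 0 ≤ MK * Mv := mul_nonneg hMK0 hMv0
        have hLdM : 0 ≤ (Lip * d ^ κ) * Mv := mul_nonneg (mul_nonneg hLip hdκ0) hMv0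
        gcongr
        · linarith
    _ = ((2 * MK + Lip) * Mv / (1 - μ)) * d ^ κ := by ring

lemma sup_bd {μ ε : ℝ} (hμ0 : 0 < μ) (hμ1 : μ < 1)
    (hε0 : 0 < ε) (hε1 : ε ≤ 1) {K : ℝ → ℝ → ℝ} {v : ℝ → ℝ}
    {MK Mv : ℝ} (hMK0 : 0 ≤ MK) (hMv0 : 0 ≤ Mv)
    (hKb : ∀ t ∈ Icc (0:ℝ) 1, ∀ s ∈ Icc (0:ℝ) 1, |K t s| ≤ MK)
    (hKc : ∀ t ∈ Icc (0:ℝ) 1, ContinuousOn (K t) (Icc 0 1))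
    (hvb : ∀ s ∈ Icc (0:ℝ) 1, |v s| ≤ Mv)
    (hvc : ContinuousOn v (Icc 0 1))
    {t : ℝ} (ht : t ∈ Icc (0:ℝ) 1) :
    |K2op μ ε K v t| ≤ MK * Mv / (1 - μ) := by
  have hν : (0:ℝ) < 1 - μ := by linarith
  set c := ε * t with hc_def
  have h0c : 0 ≤ c := mul_nonneg hε0.le ht.1
  have hc1 : c ≤ 1 := by
    have : ε * t ≤ 1 * 1 := mul_le_mul hε1 ht.2 ht.1 zero_le_one
    simpa using this
  have hsub : Icc (0:ℝ) c ⊆ Icc (0:ℝ) 1 := Icc_subset_Icc le_rfl hc1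
  have hc : ContinuousOn (fun τ => K t τ * v τ) (Icc (0:ℝ) 1) := (hKc t ht).mul hvc
  have I : IntervalIntegrable (fun τ => (c - τ) ^ (-μ) * (K t τ * v τ)) volume 0 c :=
    (sing_intble hμ1 0 c c).mul_continuousOn
      (hc.mono (by rw [uIcc_of_le h0c]; exact hsub))
  have e : K2op μ ε K v t = ∫ τ in (0:ℝ)..c, (c - τ) ^ (-μ) * (K t τ * v τ) := by
    simp only [K2op, mul_assoc, ← hc_def]
  rw [e]
  calc |∫ τ in (0:ℝ)..c, (c - τ) ^ (-μ) * (K t τ * v τ)|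
      ≤ ∫ τ in (0:ℝ)..c, |(c - τ) ^ (-μ) * (K t τ * v τ)| :=
        intervalIntegral.abs_integral_le_integral_abs h0c
    _ ≤ ∫ τ in (0:ℝ)..c, (c - τ) ^ (-μ) * (MK * Mv) := by
        apply intervalIntegral.integral_mono_on h0c I.abs
          ((sing_intble hμ1 0 c c).mul_const _)
        intro τ hτ
        have hct : 0 ≤ c - τ := by linarith [hτ.2]
        have hr0 : 0 ≤ (c - τ) ^ (-μ) := Real.rpow_nonneg hct _
        rw [abs_mul, abs_of_nonneg hr0, abs_mul]
        apply mul_le_mul_of_nonneg_left _ hr0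
        exact mul_le_mul (hKb t ht τ (hsub hτ)) (hvb τ (hsub hτ)) (abs_nonneg _) hMK0
    _ = (MK * Mv) * (c ^ (1 - μ) / (1 - μ)) := by
        rw [intervalIntegral.integral_mul_const, sing_int hμ1, sub_self, sub_zero,
          Real.zero_rpow (by linarith : (1:ℝ) - μ ≠ 0), sub_zero]
        ring
    _ ≤ MK * Mv / (1 - μ) := by
        have h1 : c ^ (1 - μ) ≤ 1 := Real.rpow_le_one h0c hc1 hν.le
        have h2 : 0 ≤ MK * Mv := mul_nonneg hMK0 hMv0
        rw [div_eq_mul_one_div (MK * Mv)]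
        gcongr


/-- For `μ ∈ (0,1)`, `κ ∈ (0,1-μ)`, `ε ∈ (0,1]` and `K` continuous and `κ`-Hölder
in its first variable, there is `C > 0` such that for every continuous `v` on
`[0,1]`, `𝒦₂v` is `κ`-Hölder continuous on `[0,1]` and its Hölder norm
`‖𝒦₂v‖_{0,κ} = max |𝒦₂v| + sup_{θ≠η} |𝒦₂v(θ)-𝒦₂v(η)|/|θ-η|^κ` is bounded
by `C · max |v|`. -/
theorem K2_maps_C_to_Holder (μ κ ε : ℝ) (hμ : μ ∈ Ioo (0:ℝ) 1)
    (hκ : κ ∈ Ioo (0:ℝ) (1 - μ)) (hε : ε ∈ Ioc (0:ℝ) 1) (K : ℝ → ℝ → ℝ)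
    (hKcont : ContinuousOn (fun p : ℝ × ℝ => K p.1 p.2) (Icc 0 1 ×ˢ Icc 0 1))
    (Lip : ℝ) (hLip : 0 ≤ Lip)
    (hKH : ∀ θ₁ ∈ Icc (0:ℝ) 1, ∀ θ₂ ∈ Icc (0:ℝ) 1, ∀ s ∈ Icc (0:ℝ) 1,
      |K θ₁ s - K θ₂ s| ≤ Lip * |θ₁ - θ₂| ^ κ) :
    ∃ C > (0:ℝ), ∀ v : ℝ → ℝ, ContinuousOn v (Icc (0:ℝ) 1) →
      (∃ H : ℝ, 0 ≤ H ∧ ∀ θ₁ ∈ Icc (0:ℝ) 1, ∀ θ₂ ∈ Icc (0:ℝ) 1,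
        |K2op μ ε K v θ₁ - K2op μ ε K v θ₂| ≤ H * |θ₁ - θ₂| ^ κ) ∧
      sSup ((fun θ => |K2op μ ε K v θ|) '' Icc (0:ℝ) 1)
        + sSup {q : ℝ | ∃ θ ∈ Icc (0:ℝ) 1, ∃ η ∈ Icc (0:ℝ) 1, θ ≠ η ∧
            q = |K2op μ ε K v θ - K2op μ ε K v η| / |θ - η| ^ κ}
        ≤ C * sSup ((fun θ => |v θ|) '' Icc (0:ℝ) 1) := by
  obtain ⟨hμ0, hμ1⟩ := hμ
  obtain ⟨hκ0, hκν⟩ := hκ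
  obtain ⟨hε0, hε1⟩ := hε
  have hν : (0:ℝ) < 1 - μ := by linarith
  -- bound on K
  obtain ⟨MK₀, hMK₀⟩ := (isCompact_Icc.prod isCompact_Icc).exists_bound_of_continuousOn hKcont
  set MK := max MK₀ 0 with hMK_def
  have hMK0 : 0 ≤ MK := le_max_right _ _
  have hKb : ∀ t ∈ Icc (0:ℝ) 1, ∀ s ∈ Icc (0:ℝ) 1, |K t s| ≤ MK := by
    intro t ht s hs
    exact le_trans (by simpa using hMK₀ (t, s) ⟨ht, hs⟩) (le_max_left _ _)
  have hKc : ∀ t ∈ Icc (0:ℝ) 1, ContinuousOn (K t) (Icc 0 1) := by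
    intro t ht
    have := hKcont.comp (Continuous.continuousOn (by continuity :
        Continuous (fun s : ℝ => (t, s)))) (fun s hs => mk_mem_prod ht hs)
    exact this
  refine ⟨(3 * MK + Lip) / (1 - μ) + 1, by positivity, ?_⟩
  intro v hvc
  set Mv := sSup ((fun θ => |v θ|) '' Icc (0:ℝ) 1) with hMv_def
  have himg : ((fun θ => |v θ|) '' Icc (0:ℝ) 1).Nonempty :=
    ⟨|v 0|, mem_image_of_mem _ (by norm_num)⟩
  have hbdd : BddAbove ((fun θ => |v θ|) '' Icc (0:ℝ) 1) :=
    (isCompact_Icc.image_of_continuousOn (continuous_abs.comp_continuousOn hvc)).bddAbove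
  have hvb : ∀ s ∈ Icc (0:ℝ) 1, |v s| ≤ Mv := fun s hs =>
    le_csSup hbdd (mem_image_of_mem _ hs)
  have hMv0 : 0 ≤ Mv := le_trans (abs_nonneg (v 0)) (hvb 0 (by norm_num))
  -- Hölder bound
  have hHall : ∀ θ₁ ∈ Icc (0:ℝ) 1, ∀ θ₂ ∈ Icc (0:ℝ) 1,
      |K2op μ ε K v θ₁ - K2op μ ε K v θ₂|
        ≤ ((2 * MK + Lip) * Mv / (1 - μ)) * |θ₁ - θ₂| ^ κ := by
    intro θ₁ h1 θ₂ h2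
    rcases lt_trichotomy θ₁ θ₂ with h | h | h
    · rw [abs_sub_comm, abs_sub_comm θ₁ θ₂, abs_of_pos (sub_pos.2 h)]
      exact key_holder hμ0 hμ1 hκ0 hκν hε0 hε1 hMK0 hMv0 hLip hKb hKH hKc hvb hvc h2 h1 h
    · simp [h, Real.zero_rpow (ne_of_gt hκ0)]
    · rw [abs_of_pos (sub_pos.2 h)]
      exact key_holder hμ0 hμ1 hκ0 hκν hε0 hε1 hMK0 hMv0 hLip hKb hKH hKc hvb hvc h1 h2 h
  have hH0 : 0 ≤ (2 * MK + Lip) * Mv / (1 - μ) := by positivity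
  constructor
  · exact ⟨(2 * MK + Lip) * Mv / (1 - μ), hH0, hHall⟩
  -- sup bounds
  have S1 : sSup ((fun θ => |K2op μ ε K v θ|) '' Icc (0:ℝ) 1) ≤ MK * Mv / (1 - μ) := by
    apply csSup_le
    · exact ⟨|K2op μ ε K v 0|, mem_image_of_mem _ (by norm_num)⟩
    · rintro x ⟨θ, hθ, rfl⟩
      exact sup_bd hμ0 hμ1 hε0 hε1 hMK0 hMv0 hKb hKc hvb hvc hθ
  have S2 : sSup {q : ℝ | ∃ θ ∈ Icc (0:ℝ) 1, ∃ η ∈ Icc (0:ℝ) 1, θ ≠ η ∧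
        q = |K2op μ ε K v θ - K2op μ ε K v η| / |θ - η| ^ κ}
      ≤ (2 * MK + Lip) * Mv / (1 - μ) := by
    apply csSup_le
    · exact ⟨|K2op μ ε K v 0 - K2op μ ε K v 1| / |0 - 1| ^ κ,
        0, by norm_num, 1, by norm_num, by norm_num, rfl⟩
    · rintro q ⟨θ, hθ, η, hη, hne, rfl⟩
      rw [div_le_iff₀ (Real.rpow_pos_of_pos (abs_pos.2 (sub_ne_zero.2 hne)) κ)]
      exact hHall θ hθ η hη
  have heq : MK * Mv / (1 - μ) + (2 * MK + Lip) * Mv / (1 - μ)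
      = (3 * MK + Lip) / (1 - μ) * Mv := by
    field_simp
    ring
  have hexp : ((3 * MK + Lip) / (1 - μ) + 1) * Mv
      = (3 * MK + Lip) / (1 - μ) * Mv + Mv := by ring
  linarith
end

section
/- Let α, β ∈ (−1, 1), ε ∈ (0,1], C₁, C₂ > 0, let E be a nonnegative integrable function on [0,1], and let J be a measurable function on [0,1] with ∫₀^1 J(θ)² (1−θ)^α θ^β dθ < ∞, such that E(θ) ≤ |J(θ)| + C₁ ∫₀^θ E(η) dη + C₂ ∫₀^{εθ} E(η) dη for all θ ∈ [0,1]. Then there exists a constant C > 0, depending only on C₁ + C₂, α, β, such that (∫₀^1 E(θ)² (1−θ)^α θ^β dθ)^{1/2} ≤ C (∫₀^1 J(θ)² (1−θ)^α θ^β dθ)^{1/2}. -/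
/-!
The delay term is harmless: `E ≥ 0` makes `θ ↦ ∫₀^θ E` nondecreasing, so with `S = C₁ + C₂`
the hypothesis gives `E ≤ |J| + S ∫₀^θ E`. Integrating, `G(θ) = ∫₀^θ E` satisfies the integral
Gronwall inequality `G(θ) ≤ ‖J‖_{L¹} + S ∫₀^θ G`, whence `E ≤ |J| + S e^S ‖J‖_{L¹}` on
`[0, 1]`. Minkowski's inequality in the weighted `L²` space turns this into
`‖E‖ ≤ ‖J‖ + S e^S ‖J‖_{L¹} ‖1‖`; since `α, β < 1` the inverse weight is integrable, and
Cauchy–Schwarz gives `‖J‖_{L¹} ≤ ‖J‖ (∫₀¹ (1-θ)^{-α} θ^{-β})^{1/2}`.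
-/

open MeasureTheory Set Real
open scoped ENNReal

theorem intervalIntegrable_rpow_mul_one_sub_rpow {b : ℝ} (hb : -1 < b) (a : ℝ) :
    IntervalIntegrable (fun x : ℝ => x ^ b * (1 - x) ^ a) volume 0 (1 / 2) := by
  refine (intervalIntegral.intervalIntegrable_rpow' hb).mul_continuousOn
    ((continuousOn_const.sub continuousOn_id).rpow_const fun x hx => Or.inl ?_)
  rw [uIcc_of_le (by norm_num)] at hx
  simp only [Pi.sub_apply, id]
  linarith [hx.2]

theorem integrableOn_one_sub_rpow_mul_rpow {a b : ℝ} (ha : -1 < a) (hb : -1 < b) :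
    IntegrableOn (fun x : ℝ => (1 - x) ^ a * x ^ b) (Ioo 0 1) := by
  have h_left : IntervalIntegrable (fun x : ℝ => (1 - x) ^ a * x ^ b) volume 0 (1 / 2) := by
    simpa only [mul_comm] using intervalIntegrable_rpow_mul_one_sub_rpow hb a
  have h_right := (intervalIntegrable_rpow_mul_one_sub_rpow ha b).comp_sub_left 1
  norm_num only [sub_sub_cancel, sub_zero] at h_right
  exact ((intervalIntegrable_iff_integrableOn_Ioc_of_le zero_le_one).1
    (h_left.trans h_right.symm)).mono_set Ioo_subset_Ioc_self

section Weighted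

variable {X : Type*} [MeasurableSpace X] {μ : Measure X}

theorem eLpNorm_two_withDensity_ofReal (f : X → ℝ) {w : X → ℝ} (hw : AEMeasurable w μ) :
    eLpNorm f 2 (μ.withDensity fun x => ENNReal.ofReal (w x)) =
      (∫⁻ x, ENNReal.ofReal (f x ^ 2 * w x) ∂μ) ^ (1 / 2 : ℝ) := by
  rw [eLpNorm_eq_lintegral_rpow_enorm_toReal two_ne_zero ENNReal.ofNat_ne_top,
    lintegral_withDensity_eq_lintegral_mul_non_measurable₀ _ hw.ennreal_ofReal
      (ae_of_all _ fun _ => ENNReal.ofReal_lt_top)]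
  congr 2 with x
  rw [ENNReal.ofReal_mul (sq_nonneg _), mul_comm]
  simp [Real.enorm_eq_ofReal_abs, ← ENNReal.ofReal_pow (abs_nonneg _)]

theorem lintegral_ofReal_abs_le_eLpNorm_mul {f w : X → ℝ}
    (hf : AEStronglyMeasurable f (μ.withDensity fun x => ENNReal.ofReal (w x)))
    (hw : AEMeasurable w μ) (hw0 : ∀ᵐ x ∂μ, 0 < w x) :
    ∫⁻ x, ENNReal.ofReal |f x| ∂μ ≤
      eLpNorm f 2 (μ.withDensity fun x => ENNReal.ofReal (w x)) *
        (∫⁻ x, ENNReal.ofReal (w x)⁻¹ ∂μ) ^ (1 / 2 : ℝ) := by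
  have hwinv : AEStronglyMeasurable (fun x => (w x)⁻¹)
      (μ.withDensity fun x => ENNReal.ofReal (w x)) :=
    (hw.inv.mono_ac (withDensity_absolutelyContinuous _ _)).aestronglyMeasurable
  have holder := eLpNorm_smul_le_mul_eLpNorm (p := 2) (q := 2) (r := 1) hf hwinv
  rw [eLpNorm_one_eq_lintegral_enorm, lintegral_withDensity_eq_lintegral_mul_non_measurable₀ _
      hw.ennreal_ofReal (ae_of_all _ fun _ => ENNReal.ofReal_lt_top),
    eLpNorm_two_withDensity_ofReal _ hw] at holder
  have h_inv : ∫⁻ x, ENNReal.ofReal ((w x)⁻¹ ^ 2 * w x) ∂μ =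
      ∫⁻ x, ENNReal.ofReal (w x)⁻¹ ∂μ :=
    lintegral_congr_ae <| hw0.mono fun x hx => by
      simp only [sq, mul_assoc, inv_mul_cancel₀ hx.ne', mul_one]
  calc ∫⁻ x, ENNReal.ofReal |f x| ∂μ
      = ∫⁻ x, ENNReal.ofReal (w x) * ‖(w x)⁻¹ * f x‖ₑ ∂μ :=
        lintegral_congr_ae <| hw0.mono fun x hx => by
          dsimp only
          rw [Real.enorm_eq_ofReal_abs, ← ENNReal.ofReal_mul hx.le, abs_mul, abs_inv,
            abs_of_pos hx, mul_inv_cancel_left₀ hx.ne']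
    _ ≤ _ := holder
    _ = _ := by rw [h_inv, mul_comm]

theorem eLpNorm_le_eLpNorm_add_enorm_mul {p : ℝ≥0∞} (hp : 1 ≤ p) (hp_top : p ≠ ⊤)
    {f g : X → ℝ} {K : ℝ} (hg : AEStronglyMeasurable g μ) (h : ∀ᵐ x ∂μ, ‖f x‖ ≤ ‖g x‖ + K) :
    eLpNorm f p μ ≤ eLpNorm g p μ + ‖K‖ₑ * μ univ ^ (1 / p.toReal) := by
  calc eLpNorm f p μ ≤ eLpNorm ((fun x => ‖g x‖) + fun _ => K) p μ := eLpNorm_mono_ae_real h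
    _ ≤ eLpNorm (fun x => ‖g x‖) p μ + eLpNorm (fun _ => K) p μ :=
      eLpNorm_add_le hg.norm aestronglyMeasurable_const hp
    _ = eLpNorm g p μ + ‖K‖ₑ * μ univ ^ (1 / p.toReal) := by
      rw [eLpNorm_norm, eLpNorm_const' _ (by positivity) hp_top]

end Weighted

/-- The measure `(1 - θ)^α θ^β dθ` on `(0, 1)`, so that `‖u‖_{0,ω^{α,β,1}}` is
`eLpNorm u 2 (jacobiMeasure α β)`. -/
noncomputable def jacobiMeasure (α β : ℝ) : Measure ℝ :=
  (volume.restrict (Ioo 0 1)).withDensity fun θ => ENNReal.ofReal ((1 - θ) ^ α * θ ^ β)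

theorem eLpNorm_jacobiMeasure (α β : ℝ) (f : ℝ → ℝ) :
    eLpNorm f 2 (jacobiMeasure α β) =
      (∫⁻ θ in Ioo 0 1, ENNReal.ofReal (f θ ^ 2 * (1 - θ) ^ α * θ ^ β)) ^ (1 / 2 : ℝ) := by
  simp only [mul_assoc]
  exact eLpNorm_two_withDensity_ofReal f (by fun_prop)

theorem isFiniteMeasure_jacobiMeasure {α β : ℝ} (hα : -1 < α) (hβ : -1 < β) :
    IsFiniteMeasure (jacobiMeasure α β) :=
  isFiniteMeasure_withDensity_ofReal (integrableOn_one_sub_rpow_mul_rpow hα hβ).2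

theorem lintegral_ofReal_abs_le_eLpNorm_jacobiMeasure (α β : ℝ) {f : ℝ → ℝ} (hf : Measurable f) :
    ∫⁻ θ in Ioo 0 1, ENNReal.ofReal |f θ| ≤
      eLpNorm f 2 (jacobiMeasure α β) *
        (∫⁻ θ in Ioo 0 1, ENNReal.ofReal ((1 - θ) ^ (-α) * θ ^ (-β))) ^ (1 / 2 : ℝ) := by
  have h_pos : ∀ θ ∈ Ioo (0 : ℝ) 1, 0 < (1 - θ) ^ α * θ ^ β := fun θ hθ =>
    mul_pos (rpow_pos_of_pos (sub_pos.2 hθ.2) _) (rpow_pos_of_pos hθ.1 _)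
  have h_inv : ∫⁻ θ in Ioo 0 1, ENNReal.ofReal ((1 - θ) ^ α * θ ^ β)⁻¹ =
      ∫⁻ θ in Ioo 0 1, ENNReal.ofReal ((1 - θ) ^ (-α) * θ ^ (-β)) :=
    setLIntegral_congr_fun measurableSet_Ioo fun θ hθ => by
      rw [rpow_neg (sub_pos.2 hθ.2).le, rpow_neg hθ.1.le, mul_inv]
  rw [← h_inv]
  exact lintegral_ofReal_abs_le_eLpNorm_mul hf.aestronglyMeasurable (by fun_prop)
    (ae_restrict_of_forall_mem measurableSet_Ioo h_pos)

theorem integrableOn_abs_of_eLpNorm_jacobiMeasure_lt_top {α β : ℝ} (hα : α < 1) (hβ : β < 1)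
    {f : ℝ → ℝ} (hf : Measurable f) (h : eLpNorm f 2 (jacobiMeasure α β) < ⊤) :
    IntegrableOn (fun θ => |f θ|) (Icc 0 1) := by
  have h_inv :=
    (integrableOn_one_sub_rpow_mul_rpow (neg_lt_neg hα) (neg_lt_neg hβ)).lintegral_lt_top
  rw [integrableOn_Icc_iff_integrableOn_Ioo]
  refine ⟨hf.abs.aestronglyMeasurable, ?_⟩
  rw [hasFiniteIntegral_iff_ofReal (ae_of_all _ fun _ => abs_nonneg _)]
  exact (lintegral_ofReal_abs_le_eLpNorm_jacobiMeasure α β hf).trans_lt <|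
    ENNReal.mul_lt_top h <| ENNReal.rpow_lt_top_of_nonneg (by norm_num) h_inv.ne

theorem exists_eLpNorm_jacobiMeasure_le_of_le_add_integral {α β : ℝ}
    (hα : α ∈ Ioo (-1) 1) (hβ : β ∈ Ioo (-1) 1) :
    ∃ M ≥ (0 : ℝ), ∀ c ≥ (0 : ℝ), ∀ E J : ℝ → ℝ, Measurable J →
      IntegrableOn (fun θ => |J θ|) (Icc 0 1) →
      (∀ θ ∈ Icc 0 1, 0 ≤ E θ ∧ E θ ≤ |J θ| + c * ∫ η in 0..1, |J η|) →
      eLpNorm E 2 (jacobiMeasure α β) ≤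
        ENNReal.ofReal (1 + c * M) * eLpNorm J 2 (jacobiMeasure α β) := by
  set ν := jacobiMeasure α β
  have := isFiniteMeasure_jacobiMeasure hα.1 hβ.1
  set V := (∫⁻ θ in Ioo 0 1, ENNReal.ofReal ((1 - θ) ^ (-α) * θ ^ (-β))) ^ (1 / 2 : ℝ)
  set W := ν univ ^ (1 / 2 : ℝ)
  have hV : V ≠ ⊤ := ENNReal.rpow_ne_top_of_nonneg (by norm_num)
    (integrableOn_one_sub_rpow_mul_rpow (neg_lt_neg hα.2) (neg_lt_neg hβ.2)).lintegral_lt_top.ne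
  have hW : W ≠ ⊤ := ENNReal.rpow_ne_top_of_nonneg (by norm_num) (measure_ne_top ν univ)
  refine ⟨V.toReal * W.toReal, by positivity, fun c hc E J hJ hJ_int h => ?_⟩
  set K := c * ∫ η in 0..1, |J η|
  have h_ae : ∀ᵐ θ ∂ν, ‖E θ‖ ≤ ‖J θ‖ + K :=
    (withDensity_absolutelyContinuous _ _).ae_le <|
      ae_restrict_of_forall_mem measurableSet_Ioo fun θ hθ => by
        obtain ⟨hE0, hE⟩ := h θ (Ioo_subset_Icc_self hθ)
        rwa [Real.norm_of_nonneg hE0, Real.norm_eq_abs]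
  have hK : ‖K‖ₑ ≤ ENNReal.ofReal c * (eLpNorm J 2 ν * V) := by
    have hK0 : 0 ≤ K :=
      mul_nonneg hc (intervalIntegral.integral_nonneg zero_le_one fun θ _ => abs_nonneg (J θ))
    rw [Real.enorm_of_nonneg hK0, ENNReal.ofReal_mul hc,
      intervalIntegral.integral_of_le zero_le_one, integral_Ioc_eq_integral_Ioo,
      ofReal_integral_eq_lintegral_ofReal (hJ_int.mono_set Ioo_subset_Icc_self)
        (ae_of_all _ fun _ => abs_nonneg _)]
    gcongr
    exact lintegral_ofReal_abs_le_eLpNorm_jacobiMeasure α β hJ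
  calc eLpNorm E 2 ν ≤ eLpNorm J 2 ν + ‖K‖ₑ * W := by
        simpa [W] using eLpNorm_le_eLpNorm_add_enorm_mul one_le_two ENNReal.ofNat_ne_top
          hJ.aestronglyMeasurable h_ae
    _ ≤ eLpNorm J 2 ν + ENNReal.ofReal c * (eLpNorm J 2 ν * V) * W := by gcongr
    _ = ENNReal.ofReal (1 + c * (V.toReal * W.toReal)) * eLpNorm J 2 ν := by
        rw [ENNReal.ofReal_add zero_le_one (by positivity), ENNReal.ofReal_one,
          ENNReal.ofReal_mul hc, ENNReal.ofReal_mul ENNReal.toReal_nonneg,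
          ENNReal.ofReal_toReal hV, ENNReal.ofReal_toReal hW]
        ring

theorem add_mul_gronwallBound_zero (A K t : ℝ) :
    A + K * gronwallBound 0 K A t = A * exp (K * t) := by
  rcases eq_or_ne K 0 with rfl | hK
  · simp
  · rw [gronwallBound_of_K_ne_0 hK]
    field_simp
    ring

theorem le_mul_exp_of_le_add_mul_integral {u : ℝ → ℝ} {a b A K : ℝ}
    (hu : ContinuousOn u (Icc a b)) (hK : 0 ≤ K)
    (h : ∀ x ∈ Icc a b, u x ≤ A + K * ∫ t in a..x, u t) :
    ∀ x ∈ Icc a b, u x ≤ A * exp (K * (x - a)) := by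
  intro x hx
  have hab : a ≤ b := hx.1.trans hx.2
  have hu_int : IntervalIntegrable u volume a b := hu.intervalIntegrable_of_Icc hab
  have h_deriv : ∀ y ∈ Ico a b,
      HasDerivWithinAt (fun z => ∫ t in a..z, u t) (u y) (Ici y) y := by
    intro y hy
    have : Fact (y ∈ Icc a b) := ⟨Ico_subset_Icc_self hy⟩
    refine (intervalIntegral.integral_hasDerivWithinAt_right (s := Icc a b) (hu_int.mono_set ?_)
      (hu.stronglyMeasurableAtFilter_nhdsWithin measurableSet_Icc y)
      (hu y (Ico_subset_Icc_self hy))).mono_of_mem_nhdsWithin ?_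
    · rw [uIcc_of_le hy.1, uIcc_of_le hab]
      exact Icc_subset_Icc_right hy.2.le
    · exact Filter.mem_of_superset (Icc_mem_nhdsGE hy.2) (Icc_subset_Icc_left hy.1)
  -- The primitive `H` has right derivative `u ≤ A + K * H`: the differential Gronwall bound.
  have h_primitive :=
    le_gronwallBound_of_liminf_deriv_right_le (f' := u) (δ := 0) (K := K) (ε := A)
    (intervalIntegral.continuousOn_primitive_interval' hu_int left_mem_uIcc |>.mono
      (by rw [uIcc_of_le hab]))
    (fun y hy _ hr => (h_deriv y hy).liminf_right_slope_le hr)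
    (by simp) (fun y hy => by linarith [h y (Ico_subset_Icc_self hy)]) x hx
  calc u x ≤ A + K * ∫ t in a..x, u t := h x hx
    _ ≤ A + K * gronwallBound 0 K A (x - a) := by gcongr
    _ = A * exp (K * (x - a)) := add_mul_gronwallBound_zero A K (x - a)

theorem le_add_mul_integral_of_le_delay_integral {E g : ℝ → ℝ} {C₁ C₂ ε T : ℝ}
    (hE : IntegrableOn E (Icc 0 T)) (hE0 : ∀ θ ∈ Icc 0 T, 0 ≤ E θ) (hC₂ : 0 ≤ C₂)
    (hε : ε ∈ Icc 0 1)
    (h : ∀ θ ∈ Icc 0 T, E θ ≤ g θ + C₁ * (∫ η in 0..θ, E η) + C₂ * ∫ η in 0..(ε * θ), E η) :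
    ∀ θ ∈ Icc 0 T, E θ ≤ g θ + (C₁ + C₂) * ∫ η in 0..θ, E η := by
  intro θ hθ
  have hE_int : IntervalIntegrable E volume 0 θ := by
    refine (hE.mono_set ?_).intervalIntegrable
    rw [uIcc_of_le hθ.1]
    exact Icc_subset_Icc_right hθ.2
  have hE0_ae : 0 ≤ᵐ[volume.restrict (Ioc 0 θ)] E :=
    ae_restrict_of_forall_mem measurableSet_Ioc fun η hη => hE0 η ⟨hη.1.le, hη.2.trans hθ.2⟩
  have h_delay : ∫ η in 0..(ε * θ), E η ≤ ∫ η in 0..θ, E η :=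
    intervalIntegral.integral_mono_interval le_rfl (mul_nonneg hε.1 hθ.1)
      (mul_le_of_le_one_left hθ.1 hε.2) hE0_ae hE_int
  nlinarith [h θ hθ]

theorem le_add_mul_exp_mul_integral_of_le_add_mul_integral {E g : ℝ → ℝ} {S T : ℝ}
    (hE : IntegrableOn E (Icc 0 T)) (hg : IntegrableOn g (Icc 0 T))
    (hg0 : ∀ θ ∈ Icc 0 T, 0 ≤ g θ) (hS : 0 ≤ S)
    (h : ∀ θ ∈ Icc 0 T, E θ ≤ g θ + S * ∫ η in 0..θ, E η) :
    ∀ θ ∈ Icc 0 T, E θ ≤ g θ + S * exp (S * T) * ∫ η in 0..T, g η := by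
  set G : ℝ → ℝ := fun θ => ∫ η in 0..θ, E η
  set A := ∫ η in 0..T, g η
  have h_sub : ∀ θ ∈ Icc 0 T, uIcc 0 θ ⊆ Icc 0 T := fun θ hθ => by
    rw [uIcc_of_le hθ.1]; exact Icc_subset_Icc_right hθ.2
  have hG_cont : ContinuousOn G (Icc 0 T) := by
    rcases lt_or_ge T 0 with hT | hT
    · simp [Icc_eq_empty_of_lt hT]
    · rw [← uIcc_of_le hT] at hE ⊢
      exact intervalIntegral.continuousOn_primitive_interval hE
  have hG_le : ∀ θ ∈ Icc 0 T, G θ ≤ A + S * ∫ η in 0..θ, G η := by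
    intro θ hθ
    have hg_int : IntervalIntegrable g volume 0 θ := (hg.mono_set (h_sub θ hθ)).intervalIntegrable
    have hG_int : IntervalIntegrable G volume 0 θ :=
      (hG_cont.mono (h_sub θ hθ)).intervalIntegrable
    have hgA : ∫ η in 0..θ, g η ≤ A :=
      intervalIntegral.integral_mono_interval le_rfl hθ.1 hθ.2
        (ae_restrict_of_forall_mem measurableSet_Ioc fun η hη => hg0 η ⟨hη.1.le, hη.2⟩)
        (hg.mono_set (h_sub T ⟨hθ.1.trans hθ.2, le_rfl⟩)).intervalIntegrable
    calc G θ ≤ ∫ η in 0..θ, (g η + S * G η) :=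
          intervalIntegral.integral_mono_on hθ.1 (hE.mono_set (h_sub θ hθ)).intervalIntegrable
            (hg_int.add (hG_int.const_mul S)) fun η hη => h η ⟨hη.1, hη.2.trans hθ.2⟩
      _ = (∫ η in 0..θ, g η) + S * ∫ η in 0..θ, G η := by
          rw [intervalIntegral.integral_add hg_int (hG_int.const_mul S),
            intervalIntegral.integral_const_mul]
      _ ≤ A + S * ∫ η in 0..θ, G η := by linarith
  intro θ hθ
  have hA : 0 ≤ A := intervalIntegral.integral_nonneg (hθ.1.trans hθ.2) hg0
  calc E θ ≤ g θ + S * G θ := h θ hθ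
    _ ≤ g θ + S * (A * exp (S * (θ - 0))) := by
        gcongr
        exact le_mul_exp_of_le_add_mul_integral hG_cont hS hG_le θ hθ
    _ ≤ g θ + S * (A * exp (S * T)) := by
        rw [sub_zero]
        gcongr
        exact hθ.2
    _ = g θ + S * exp (S * T) * A := by ring

/-- Gronwall-type weighted `L²` bound with a proportional-delay term and Jacobi
weight `(1-θ)^α θ^β`, `α, β ∈ (-1,1)`: for every `S > 0` there is `C > 0`
depending only on `S = C₁ + C₂`, `α`, `β`, such that whenever `ε ∈ (0,1]`,
`C₁, C₂ > 0` with `C₁ + C₂ = S`, `E ≥ 0` is integrable, `J` is measurable with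
finite weighted `L²` norm, and `E θ ≤ |J θ| + C₁ ∫₀^θ E + C₂ ∫₀^{εθ} E` on
`[0,1]`, we have `‖E‖_{0,ω^{α,β,1}} ≤ C ‖J‖_{0,ω^{α,β,1}}`. -/
theorem weightedL2_bound_of_delay_gronwall (α β : ℝ)
    (hα : α ∈ Ioo (-1:ℝ) 1) (hβ : β ∈ Ioo (-1:ℝ) 1) (S : ℝ) (hS : 0 < S) :
    ∃ C > (0:ℝ), ∀ C₁ C₂ : ℝ, 0 < C₁ → 0 < C₂ → C₁ + C₂ = S →
      ∀ ε ∈ Ioc (0:ℝ) 1, ∀ E J : ℝ → ℝ,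
        IntegrableOn E (Icc (0:ℝ) 1) → (∀ θ ∈ Icc (0:ℝ) 1, 0 ≤ E θ) →
        Measurable J →
        (∫⁻ θ in Ioo (0:ℝ) 1, ENNReal.ofReal (J θ ^ 2 * (1 - θ) ^ α * θ ^ β)) < ⊤ →
        (∀ θ ∈ Icc (0:ℝ) 1, E θ ≤ |J θ| + C₁ * (∫ η in (0:ℝ)..θ, E η)
            + C₂ * ∫ η in (0:ℝ)..(ε * θ), E η) →
        (∫⁻ θ in Ioo (0:ℝ) 1, ENNReal.ofReal (E θ ^ 2 * (1 - θ) ^ α * θ ^ β)) ^ ((1:ℝ)/2)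
          ≤ ENNReal.ofReal C *
            (∫⁻ θ in Ioo (0:ℝ) 1, ENNReal.ofReal (J θ ^ 2 * (1 - θ) ^ α * θ ^ β)) ^ ((1:ℝ)/2) := by
  obtain ⟨M, hM0, hM⟩ := exists_eLpNorm_jacobiMeasure_le_of_le_add_integral hα hβ
  refine ⟨1 + S * exp S * M, by positivity, ?_⟩
  intro C₁ C₂ _ hC₂ hC ε hε E J hE hE0 hJ hJ_fin h
  rw [← eLpNorm_jacobiMeasure, ← eLpNorm_jacobiMeasure]
  have hJ_int : IntegrableOn (fun θ => |J θ|) (Icc 0 1) :=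
    integrableOn_abs_of_eLpNorm_jacobiMeasure_lt_top hα.2 hβ.2 hJ <| by
      rw [eLpNorm_jacobiMeasure]
      exact ENNReal.rpow_lt_top_of_nonneg (by norm_num) hJ_fin.ne
  have h_gronwall := le_add_mul_exp_mul_integral_of_le_add_mul_integral hE hJ_int
    (fun _ _ => abs_nonneg _) (hC ▸ hS.le)
    (le_add_mul_integral_of_le_delay_integral hE hE0 hC₂.le ⟨hε.1.le, hε.2⟩ h)
  rw [hC, mul_one] at h_gronwall
  exact hM _ (by positivity) E J hJ hJ_int fun θ hθ => ⟨hE0 θ hθ, h_gronwall θ hθ⟩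
end
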